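/- arXiv:2105.05895 — 4 statements merged into one kernel-verified Lean document; each statement's English description precedes it below -/
import Mathlib

section
/- Suppose Assumption (C) holds, let r ∈ [1, 2] satisfy S(p, u) ∈ L^r(X) for all p ∈ P, u ∈ U, and let 𝕊(u) denote the unique solution of the fixed-point problem (F) with parameter u. Let u ∈ U ∩ L^∞_⊕(Y) and let h ∈ ℝ⁺(U − u) satisfy u + τ₀h ∈ U for some τ₀ > 0. Then the Hadamard directional derivative δ := 𝕊'(u; h) ∈ L^{[r,∞]}(X) is the smallest element, with respect to the pointwise μ-a.e. order, of the set 𝒜 of all ζ ∈ L^{[r,∞]}(X) for which there exist sequences {ζ_n} ⊂ L^{[r,∞]}(X) and {τ_n} ⊂ (0, τ₀) such that: ζ_n ≤ ζ_{n+1} and τ_{n+1} ≤ τ_n for all n; τ_n → 0; ζ_n → ζ in L^q(X) for all q ∈ [r, ∞); 𝕊(u) + τ_n ζ_n is a supersolution of (F) with parameter u + τ_n h for all n; and Ψ'((𝕊(u), u); (ζ_n, h)) − ζ_n → 0 μ-a.e. in X as n → ∞. In particular, 𝒜 has a unique smallest element. -/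
open MeasureTheory Filter Topology ENNReal


namespace Stmt13Aux

variable {X : Type*} [MeasurableSpace X] {μ : Measure X}

lemma lintegral_ofReal_sq_lt_top {f : X → ℝ} (hf : MemLp f 2 μ) :
    ∫⁻ x, (ENNReal.ofReal (f x)) ^ (2 : ℕ) ∂μ < ∞ := by
  have h1 : eLpNorm f 2 μ < ∞ := hf.2
  rw [eLpNorm_eq_lintegral_rpow_enorm_toReal (by norm_num) (by norm_num)] at h1
  simp only [enorm_eq_nnnorm] at h1
  have h2 : ∫⁻ x, (‖f x‖₊ : ℝ≥0∞) ^ ((2 : ℝ≥0∞).toReal) ∂μ < ∞ := by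
    by_contra hcon
    push_neg at hcon
    have : ∫⁻ x, (‖f x‖₊ : ℝ≥0∞) ^ ((2 : ℝ≥0∞).toReal) ∂μ = ∞ := top_le_iff.mp hcon
    rw [this] at h1
    rw [ENNReal.top_rpow_of_pos (by norm_num)] at h1
    exact (lt_irrefl _ h1).elim
  refine lt_of_le_of_lt (lintegral_mono fun x => ?_) h2
  have : (ENNReal.ofReal (f x)) ≤ (‖f x‖₊ : ℝ≥0∞) := by
    rw [← enorm_eq_nnnorm, Real.enorm_eq_ofReal_abs]
    exact ENNReal.ofReal_le_ofReal (le_abs_self _)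
  calc (ENNReal.ofReal (f x)) ^ (2 : ℕ) ≤ (‖f x‖₊ : ℝ≥0∞) ^ (2 : ℕ) := pow_le_pow_left' this 2
    _ = (‖f x‖₊ : ℝ≥0∞) ^ ((2 : ℝ≥0∞).toReal) := by
        rw [ENNReal.toReal_ofNat, ← ENNReal.rpow_natCast]
        norm_num

lemma ae_eq_of_lintegral_le {f g : X → ℝ≥0∞} (hf : AEMeasurable f μ) (hg : AEMeasurable g μ)
    (hfg : f ≤ᵐ[μ] g) (hfin : ∫⁻ x, f x ∂μ ≠ ∞)
    (hle : ∫⁻ x, g x ∂μ ≤ ∫⁻ x, f x ∂μ) : f =ᵐ[μ] g := by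
  have heq : ∫⁻ x, g x ∂μ = ∫⁻ x, f x ∂μ := le_antisymm hle (lintegral_mono_ae hfg)
  have hsub : ∫⁻ x, (g x - f x) ∂μ = ∫⁻ x, g x ∂μ - ∫⁻ x, f x ∂μ :=
    lintegral_sub' hf hfin hfg
  rw [heq, tsub_self] at hsub
  have h0 : (fun x => g x - f x) =ᵐ[μ] 0 :=
    (lintegral_eq_zero_iff' (hg.sub hf)).mp hsub
  filter_upwards [h0, hfg] with x h0x hfgx
  exact le_antisymm hfgx (tsub_eq_zero_iff_le.mp h0x)

/-- **Key comparison lemma** (Knaster–Tarski style): the unique fixed point of a monotone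
nonnegative map on `L²` lies below every supersolution. -/
lemma fixedpoint_le_supersolution
    (Ψ : Lp ℝ 2 μ → Lp ℝ 2 μ)
    (hmono : ∀ a b : Lp ℝ 2 μ, a ≤ b → Ψ a ≤ Ψ b)
    (hpos : ∀ a : Lp ℝ 2 μ, 0 ≤ Ψ a)
    (s : Lp ℝ 2 μ) (hs : Ψ s = s)
    (huniq : ∀ z : Lp ℝ 2 μ, Ψ z = z → z = s)
    (v : Lp ℝ 2 μ) (hv : Ψ v ≤ v) : s ≤ v := by
  classical
  set m : Lp ℝ 2 μ := v ⊓ 0 with hm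
  have hm_le_v : m ≤ v := inf_le_left
  have hm_le_0 : m ≤ (0 : Lp ℝ 2 μ) := inf_le_right
  set K : Set (Lp ℝ 2 μ) := {z | m ≤ z ∧ z ≤ v ∧ z ≤ Ψ z} with hK
  have hmK : m ∈ K := ⟨le_rfl, hm_le_v, hm_le_0.trans (hpos m)⟩
  have hKsup : ∀ a ∈ K, ∀ b ∈ K, a ⊔ b ∈ K := by
    rintro a ⟨hma, hav, haΨ⟩ b ⟨hmb, hbv, hbΨ⟩
    refine ⟨hma.trans le_sup_left, sup_le hav hbv, sup_le ?_ ?_⟩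
    · exact haΨ.trans (hmono _ _ le_sup_left)
    · exact hbΨ.trans (hmono _ _ le_sup_right)
  -- the strictly monotone energy functional
  set G : Lp ℝ 2 μ → ℝ≥0∞ := fun z => ∫⁻ x, (ENNReal.ofReal (z x - m x)) ^ (2 : ℕ) ∂μ with hG
  have hGmeas : ∀ z : Lp ℝ 2 μ, AEMeasurable (fun x => (ENNReal.ofReal (z x - m x)) ^ (2 : ℕ)) μ := by
    intro z
    exact (((Lp.aestronglyMeasurable z).aemeasurable.sub
      (Lp.aestronglyMeasurable m).aemeasurable).ennreal_ofReal).pow_const 2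
  have hG_mono : ∀ a b : Lp ℝ 2 μ, a ≤ b → G a ≤ G b := by
    intro a b hab
    refine lintegral_mono_ae ?_
    filter_upwards [(Lp.coeFn_le a b).mpr hab] with x hx
    exact pow_le_pow_left' (ENNReal.ofReal_le_ofReal (by linarith)) 2
  have hG_fin : ∀ a : Lp ℝ 2 μ, G a < ∞ := fun a =>
    lintegral_ofReal_sq_lt_top ((Lp.memLp a).sub (Lp.memLp m))
  -- approximate the supremum of G over K by a monotone sequence in K
  set α : ℝ≥0∞ := sSup (G '' K) with hα
  obtain ⟨Gs, -, hGs_tendsto, hGs_mem⟩ :=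
    exists_seq_tendsto_sSup (S := G '' K) ⟨G m, Set.mem_image_of_mem _ hmK⟩ (OrderTop.bddAbove _)
  choose z' hz'K hz'G using fun n => hGs_mem n
  let zseq : ℕ → Lp ℝ 2 μ := fun n => Nat.rec (z' 0) (fun k acc => acc ⊔ z' (k + 1)) n
  have hzseq_succ : ∀ n, zseq (n + 1) = zseq n ⊔ z' (n + 1) := fun n => rfl
  have hzseqK : ∀ n, zseq n ∈ K := by
    intro n; induction n with
    | zero => exact hz'K 0
    | succ k ih => rw [hzseq_succ]; exact hKsup _ ih _ (hz'K (k + 1))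
  have hzseq_mono : ∀ n, zseq n ≤ zseq (n + 1) := fun n => by
    rw [hzseq_succ]; exact le_sup_left
  have hz'_le : ∀ n, z' n ≤ zseq n := by
    intro n; cases n with
    | zero => exact le_rfl
    | succ k => rw [hzseq_succ]; exact le_sup_right
  have hGzseq_le : ∀ n, G (zseq n) ≤ α := fun n =>
    le_sSup (Set.mem_image_of_mem _ (hzseqK n))
  have hGzseq_tendsto : Tendsto (fun n => G (zseq n)) atTop (𝓝 α) := by
    refine tendsto_of_tendsto_of_tendsto_of_le_of_le (g := Gs) hGs_tendsto tendsto_const_nhds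
      (fun n => ?_) hGzseq_le
    rw [← hz'G n]; exact hG_mono _ _ (hz'_le n)
  -- almost-everywhere monotone limit
  have hae_mono : ∀ᵐ x ∂μ, ∀ n, zseq n x ≤ zseq (n + 1) x := by
    rw [ae_all_iff]; intro n; exact (Lp.coeFn_le _ _).mpr (hzseq_mono n)
  have hae_bounds : ∀ᵐ x ∂μ, ∀ n, m x ≤ zseq n x ∧ zseq n x ≤ v x := by
    rw [ae_all_iff]; intro n
    have h1 := (Lp.coeFn_le m (zseq n)).mpr (hzseqK n).1
    have h2 := (Lp.coeFn_le (zseq n) v).mpr (hzseqK n).2.1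
    filter_upwards [h1, h2] with x hx1 hx2 using ⟨hx1, hx2⟩
  set g : X → ℝ := fun x => ⨆ n, zseq n x with hgdef
  have hae_tendsto : ∀ᵐ x ∂μ, Tendsto (fun n => zseq n x) atTop (𝓝 (g x)) := by
    filter_upwards [hae_mono, hae_bounds] with x hmx hbx
    exact tendsto_atTop_ciSup (monotone_nat_of_le_succ hmx) ⟨v x, fun y ⟨n, hn⟩ => hn ▸ (hbx n).2⟩
  have hae_le_g : ∀ᵐ x ∂μ, ∀ n, zseq n x ≤ g x := by
    filter_upwards [hae_bounds] with x hbx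
    intro n
    exact le_ciSup ⟨v x, fun y ⟨k, hk⟩ => hk ▸ (hbx k).2⟩ n
  have hae_g_bounds : ∀ᵐ x ∂μ, m x ≤ g x ∧ g x ≤ v x := by
    filter_upwards [hae_bounds, hae_le_g] with x hbx hlg
    exact ⟨(hbx 0).1.trans (hlg 0), ciSup_le fun n => (hbx n).2⟩
  have hg_meas : AEStronglyMeasurable g μ :=
    aestronglyMeasurable_of_tendsto_ae atTop (fun n => Lp.aestronglyMeasurable (zseq n))
      hae_tendsto
  have hg_mem : MemLp g 2 μ := by
    refine MemLp.of_le (((Lp.memLp m).norm).add ((Lp.memLp v).norm)) hg_meas ?_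
    filter_upwards [hae_g_bounds] with x ⟨h1, h2⟩
    simp only [Pi.add_apply, Real.norm_eq_abs]
    have h7 : |(|((m : Lp ℝ 2 μ)) x| + |((v : Lp ℝ 2 μ)) x|)|
        = |((m : Lp ℝ 2 μ)) x| + |((v : Lp ℝ 2 μ)) x| :=
      abs_of_nonneg (add_nonneg (abs_nonneg _) (abs_nonneg _))
    rw [h7, abs_le]
    have h3 := neg_le_abs ((m : Lp ℝ 2 μ) x)
    have h4 := le_abs_self ((v : Lp ℝ 2 μ) x)
    have h5 := abs_nonneg ((m : Lp ℝ 2 μ) x)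
    have h6 := abs_nonneg ((v : Lp ℝ 2 μ) x)
    constructor <;> linarith
  set zstar : Lp ℝ 2 μ := hg_mem.toLp g with hzstar
  have hzstar_coe : ⇑zstar =ᵐ[μ] g := hg_mem.coeFn_toLp
  have hzseq_le_zstar : ∀ n, zseq n ≤ zstar := by
    intro n
    rw [← Lp.coeFn_le]
    filter_upwards [hae_le_g, hzstar_coe] with x hx he
    rw [he]; exact hx n
  have hzstarK : zstar ∈ K := by
    refine ⟨?_, ?_, ?_⟩
    · rw [← Lp.coeFn_le]
      filter_upwards [hae_g_bounds, hzstar_coe] with x hx he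
      rw [he]; exact hx.1
    · rw [← Lp.coeFn_le]
      filter_upwards [hae_g_bounds, hzstar_coe] with x hx he
      rw [he]; exact hx.2
    · rw [← Lp.coeFn_le]
      have hΨ : ∀ n, zseq n ≤ Ψ zstar := fun n =>
        (hzseqK n).2.2.trans (hmono _ _ (hzseq_le_zstar n))
      have hΨae : ∀ᵐ x ∂μ, ∀ n, zseq n x ≤ Ψ zstar x := by
        rw [ae_all_iff]; intro n; exact (Lp.coeFn_le _ _).mpr (hΨ n)
      filter_upwards [hΨae, hzstar_coe, hae_bounds] with x hx he hbx
      rw [he]; exact ciSup_le fun n => hx n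
  -- G attains its supremum at zstar
  have hGzstar : G zstar = α := by
    refine le_antisymm (le_sSup (Set.mem_image_of_mem _ hzstarK)) ?_
    exact le_of_tendsto hGzseq_tendsto
      (Eventually.of_forall fun n => hG_mono _ _ (hzseq_le_zstar n))
  -- Ψ zstar is also in K, with no larger energy, hence equals zstar
  have hΨzstarK : Ψ zstar ∈ K :=
    ⟨hm_le_0.trans (hpos _), (hmono _ _ hzstarK.2.1).trans hv, hmono _ _ hzstarK.2.2⟩
  have hGle : G (Ψ zstar) ≤ G zstar := hGzstar ▸ le_sSup (Set.mem_image_of_mem _ hΨzstarK)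
  have haeeq : (fun x => (ENNReal.ofReal (zstar x - m x)) ^ (2 : ℕ))
      =ᵐ[μ] (fun x => (ENNReal.ofReal (Ψ zstar x - m x)) ^ (2 : ℕ)) := by
    refine ae_eq_of_lintegral_le (hGmeas zstar) (hGmeas (Ψ zstar)) ?_ (hG_fin zstar).ne hGle
    filter_upwards [(Lp.coeFn_le zstar (Ψ zstar)).mpr hzstarK.2.2] with x hx
    exact pow_le_pow_left' (ENNReal.ofReal_le_ofReal (by linarith)) 2
  have hfix : Ψ zstar = zstar := by
    refine le_antisymm ?_ hzstarK.2.2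
    rw [← Lp.coeFn_le]
    filter_upwards [haeeq, (Lp.coeFn_le zstar (Ψ zstar)).mpr hzstarK.2.2,
      (Lp.coeFn_le m zstar).mpr hzstarK.1] with x hx hle hm
    have h1 : 0 ≤ zstar x - m x := by linarith
    have h2 : 0 ≤ Ψ zstar x - m x := by linarith
    rw [← ENNReal.ofReal_pow h1, ← ENNReal.ofReal_pow h2] at hx
    have := (ENNReal.ofReal_eq_ofReal_iff (by positivity) (by positivity)).mp hx
    nlinarith
  have := huniq zstar hfix
  rw [← this]
  exact hzstarK.2.1




/-- an `L^∞` function has an a.e. absolute bound -/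
lemma exists_ae_abs_le {f : X → ℝ} (hf : MemLp f ⊤ μ) :
    ∃ M : ℝ, 0 ≤ M ∧ ∀ᵐ x ∂μ, |f x| ≤ M := by
  refine ⟨(eLpNormEssSup f μ).toReal, ENNReal.toReal_nonneg, ?_⟩
  have h1 : eLpNormEssSup f μ < ∞ := by
    have := hf.2; rwa [eLpNorm_exponent_top] at this
  filter_upwards [enorm_ae_le_eLpNormEssSup f μ] with x hx
  have := ENNReal.toReal_mono h1.ne hx
  simpa [Real.norm_eq_abs] using this

/-- pointwise smul monotone on Lp -/
lemma smul_le_smul_lp {c : ℝ} (hc : 0 ≤ c) {a b : Lp ℝ 2 μ} (hab : a ≤ b) :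
    c • a ≤ c • b := by
  rw [← Lp.coeFn_le]
  filter_upwards [(Lp.coeFn_le a b).mpr hab, Lp.coeFn_smul c a, Lp.coeFn_smul c b]
    with x h1 h2 h3
  rw [h2, h3]
  exact smul_le_smul_of_nonneg_left h1 hc

lemma tendsto_of_monotone_of_subseq {u : ℕ → ℝ} {L : ℝ} (hu : Monotone u)
    {φ : ℕ → ℕ} (hφ : StrictMono φ) (h : Tendsto (fun k => u (φ k)) atTop (𝓝 L)) :
    Tendsto u atTop (𝓝 L) := by
  have hbd : ∀ n, u n ≤ L := by
    intro n
    have h1 : u n ≤ u (φ n) := hu (hφ.le_apply)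
    have h2 : u (φ n) ≤ L := by
      refine Monotone.ge_of_tendsto (hu.comp hφ.monotone) h n
    exact h1.trans h2
  have hsup : Tendsto u atTop (𝓝 (⨆ n, u n)) :=
    tendsto_atTop_ciSup hu ⟨L, fun y ⟨n, hn⟩ => hn ▸ hbd n⟩
  have : (⨆ n, u n) = L := by
    refine le_antisymm (ciSup_le hbd) ?_
    refine le_of_tendsto h (Eventually.of_forall fun k => ?_)
    exact le_ciSup ⟨L, fun y ⟨n, hn⟩ => hn ▸ hbd n⟩ (φ k)
  rwa [this] at hsup


set_option maxHeartbeats 1000000 in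
/-- **Subsolution comparison**: under concavity, a nonnegative essentially bounded
subsolution lies below the unique fixed point (assumed essentially bounded). -/
lemma subsolution_le_fixedpoint
    (Ψ : Lp ℝ 2 μ → Lp ℝ 2 μ)
    (hmono : ∀ a b : Lp ℝ 2 μ, a ≤ b → Ψ a ≤ Ψ b)
    (hpos : ∀ a : Lp ℝ 2 μ, 0 ≤ Ψ a)
    {ε : ℝ} (hε : 0 < ε)
    (hconc : ∀ a b : Lp ℝ 2 μ, (∀ᵐ x ∂μ, -ε ≤ a x) → (∀ᵐ x ∂μ, -ε ≤ b x) →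
      ∀ lam : ℝ, 0 ≤ lam → lam ≤ 1 →
      lam • Ψ a + (1 - lam) • Ψ b ≤ Ψ (lam • a + (1 - lam) • b))
    (s : Lp ℝ 2 μ) (hs : Ψ s = s)
    (huniq : ∀ z : Lp ℝ 2 μ, Ψ z = z → z = s)
    (hstop : MemLp (⇑s) ⊤ μ)
    (v : Lp ℝ 2 μ) (hv : v ≤ Ψ v) (hv0 : 0 ≤ v) (hvtop : MemLp (⇑v) ⊤ μ) :
    v ≤ s := by
  have hs0 : 0 ≤ s := hs ▸ hpos s
  set v₀ : Lp ℝ 2 μ := v ⊔ s with hv₀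
  have hv₀sub : v₀ ≤ Ψ v₀ := by
    refine sup_le (hv.trans (hmono _ _ le_sup_left)) ?_
    conv_lhs => rw [← hs]
    exact hmono _ _ le_sup_right
  have hv₀s : s ≤ v₀ := le_sup_right
  -- essential bound on v₀ - s
  obtain ⟨Mv, hMv0, hMv⟩ := exists_ae_abs_le hvtop
  obtain ⟨Ms, hMs0, hMs⟩ := exists_ae_abs_le hstop
  set M : ℝ := Mv + Ms with hM
  have hM0 : 0 ≤ M := by positivity
  have hbound : ∀ᵐ x ∂μ, 0 ≤ v₀ x - s x ∧ v₀ x - s x ≤ M := by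
    filter_upwards [hMv, hMs, Lp.coeFn_sup v s, (Lp.coeFn_le s v₀).mpr hv₀s] with x h1 h2 h3 h4
    constructor
    · linarith
    · rw [h3]
      simp only [Pi.sup_apply]
      rcases le_total (v x) (s x) with hc | hc
      · rw [sup_eq_right.mpr hc]; rw [abs_le] at h1 h2; linarith
      · rw [sup_eq_left.mpr hc]; rw [abs_le] at h1 h2; linarith
  -- choose k with M * (1/2)^k ≤ ε
  obtain ⟨k, hk⟩ : ∃ k : ℕ, ((1:ℝ)/2) ^ k < ε / (M + 1) := by
    refine exists_pow_lt_of_lt_one (by positivity) (by norm_num)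
  have hMk : M * ((1:ℝ)/2) ^ k ≤ ε := by
    have h1 : ((1:ℝ)/2 : ℝ) ^ k ≤ ε / (M + 1) := hk.le
    have h2 : (0:ℝ) < M + 1 := by linarith
    calc M * ((1:ℝ)/2) ^ k ≤ M * (ε / (M + 1)) := by
          exact mul_le_mul_of_nonneg_left h1 hM0
      _ ≤ ε := by
          rw [mul_div_assoc']
          rw [div_le_iff₀ h2]
          nlinarith
  have hhalf : ∀ j : ℕ, (0:ℝ) ≤ ((1:ℝ)/2) ^ j := fun j => by positivity
  have hhalf1 : ∀ j : ℕ, ((1:ℝ)/2 : ℝ) ^ j ≤ 1 := fun j =>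
    pow_le_one₀ (by norm_num) (by norm_num)
  -- the scaled subsolutions
  set wseq : ℕ → Lp ℝ 2 μ := fun j => s + (((1:ℝ)/2) ^ j) • (v₀ - s) with hwseq
  have hwcoe : ∀ j, ∀ᵐ x ∂μ, wseq j x = s x + ((1:ℝ)/2) ^ j * (v₀ x - s x) := by
    intro j
    filter_upwards [Lp.coeFn_add s ((((1:ℝ)/2) ^ j) • (v₀ - s)),
      Lp.coeFn_smul (((1:ℝ)/2) ^ j : ℝ) (v₀ - s), Lp.coeFn_sub v₀ s] with x h1 h2 h3
    rw [hwseq]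
    simp only [h1, Pi.add_apply]
    rw [h2]
    simp only [Pi.smul_apply, smul_eq_mul, h3, Pi.sub_apply]
  have hwge : ∀ j, ∀ᵐ x ∂μ, s x ≤ wseq j x := by
    intro j
    filter_upwards [hwcoe j, hbound] with x h1 h2
    rw [h1]
    nlinarith [hhalf j, h2.1]
  have hwge0 : ∀ j, ∀ᵐ x ∂μ, -ε ≤ wseq j x := by
    intro j
    filter_upwards [hwge j, (Lp.coeFn_nonneg s).mpr hs0] with x h1 h2
    have : (0:ℝ) ≤ s x := h2
    linarith
  have hsge0 : ∀ᵐ x ∂μ, -ε ≤ s x := by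
    filter_upwards [(Lp.coeFn_nonneg s).mpr hs0] with x h2
    have : (0:ℝ) ≤ s x := h2
    linarith
  -- each wseq j is a subsolution
  have hwsub : ∀ j, wseq j ≤ Ψ (wseq j) := by
    intro j
    induction j with
    | zero =>
      have : wseq 0 = v₀ := by
        rw [hwseq]
        simp only [pow_zero, one_smul]
        abel
      rw [this]
      exact hv₀sub
    | succ j ih =>
      have hrep : wseq (j+1) = ((1:ℝ)/2) • wseq j + (1 - (1:ℝ)/2) • s := by
        rw [hwseq]
        simp only []
        rw [pow_succ]
        module
      have h1 : ((1:ℝ)/2) • wseq j + (1 - (1:ℝ)/2) • s ≤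
          ((1:ℝ)/2) • Ψ (wseq j) + (1 - (1:ℝ)/2) • Ψ s := by
        refine add_le_add (smul_le_smul_lp (by norm_num) ih) ?_
        rw [hs]
      have h2 := hconc (wseq j) s (hwge0 j) hsge0 ((1:ℝ)/2) (by norm_num) (by norm_num)
      rw [hrep]
      refine h1.trans (h2.trans ?_)
      rw [← hrep]
  -- the reflected supersolution
  set w : Lp ℝ 2 μ := s - (((1:ℝ)/2) ^ k) • (v₀ - s) with hwdef
  have hwcoe' : ∀ᵐ x ∂μ, w x = s x - ((1:ℝ)/2) ^ k * (v₀ x - s x) := by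
    filter_upwards [Lp.coeFn_sub s ((((1:ℝ)/2) ^ k) • (v₀ - s)),
      Lp.coeFn_smul (((1:ℝ)/2) ^ k : ℝ) (v₀ - s), Lp.coeFn_sub v₀ s] with x h1 h2 h3
    rw [hwdef]
    simp only [h1, Pi.sub_apply]
    rw [h2]
    simp only [Pi.smul_apply, smul_eq_mul, h3, Pi.sub_apply]
  have hwge' : ∀ᵐ x ∂μ, -ε ≤ w x := by
    filter_upwards [hwcoe', hbound, (Lp.coeFn_nonneg s).mpr hs0] with x h1 h2 h3
    have h4 : (0:ℝ) ≤ s x := h3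
    have h5 : ((1:ℝ)/2) ^ k * (v₀ x - s x) ≤ M * ((1:ℝ)/2) ^ k := by
      rcases h2 with ⟨h2a, h2b⟩
      calc ((1:ℝ)/2) ^ k * (v₀ x - s x) ≤ ((1:ℝ)/2) ^ k * M :=
            mul_le_mul_of_nonneg_left h2b (hhalf k)
        _ = M * ((1:ℝ)/2) ^ k := by ring
    rw [h1]
    linarith
  -- w is a supersolution: Ψ w ≤ w
  have hmid : ((1:ℝ)/2) • wseq k + (1 - (1:ℝ)/2) • w = s := by
    rw [hwseq, hwdef]
    module
  have hsuperw : Ψ w ≤ w := by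
    have h2 := hconc (wseq k) w (hwge0 k) hwge' ((1:ℝ)/2) (by norm_num) (by norm_num)
    rw [hmid] at h2
    -- h2 : (1/2) • Ψ (wseq k) + (1/2) • Ψ w ≤ Ψ s = s
    rw [hs] at h2
    rw [← Lp.coeFn_le]
    have hae1 := (Lp.coeFn_le _ _).mpr h2
    have hae2 := (Lp.coeFn_le _ _).mpr (hwsub k)
    filter_upwards [hae1, hae2, hwcoe k, hwcoe',
      Lp.coeFn_add (((1:ℝ)/2) • Ψ (wseq k)) ((1 - (1:ℝ)/2) • Ψ w),
      Lp.coeFn_smul ((1:ℝ)/2 : ℝ) (Ψ (wseq k)),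
      Lp.coeFn_smul ((1 - (1:ℝ)/2 : ℝ)) (Ψ w)] with x h1 h2x h3 h4 h5 h6 h7
    have he : ((1:ℝ)/2) * (Ψ (wseq k) x) + (1 - (1:ℝ)/2) * (Ψ w x) ≤ s x := by
      have := h1
      rw [h5] at this
      simp only [Pi.add_apply] at this
      rw [h6, h7] at this
      simpa using this
    rw [h3] at h2x
    rw [h4]
    have hq : ((1:ℝ)/2) ^ k * (v₀ x - s x) = wseq k x - s x := by rw [h3]; ring
    rw [hq]
    linarith
  -- apply the supersolution comparison
  have hcomp : s ≤ w := fixedpoint_le_supersolution Ψ hmono hpos s hs huniq w hsuperw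
  -- conclude
  rw [← Lp.coeFn_le]
  have h1 := (Lp.coeFn_le s w).mpr hcomp
  have h2 := (Lp.coeFn_le v v₀).mpr (le_sup_left : v ≤ v₀)
  filter_upwards [h1, h2, hwcoe', hbound] with x hx1 hx2 hx3 hx4
  rw [hx3] at hx1
  have hk0 : (0:ℝ) < ((1:ℝ)/2) ^ k := by positivity
  have : v₀ x - s x ≤ 0 := by nlinarith
  have hvv : v x ≤ v₀ x := hx2
  linarith

end Stmt13Aux



set_option maxHeartbeats 2000000 in

/-- Theorem 5.4 of the paper, first part: under Assumption (C), the
Hadamard directional derivative `δ = 𝕊'(u; h)` of the (single-valued) solution map `Sol`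
of the fixed-point problem (F) is the smallest element, w.r.t. the pointwise μ-a.e.
order, of the set `𝒜` of "limiting" solutions of the linearized fixed-point equation. -/
theorem stmt_13
    {X : Type*} [MeasurableSpace X] {μ : Measure X} [μ.IsComplete]
    {Y : Type*} [MeasurableSpace Y] {η : Measure Y} [η.IsComplete]
    {V : Type*} [AddCommGroup V] [PartialOrder V] [Module ℝ V]
    (P : Set V) (hP_convex : Convex ℝ P) (hP_zero : (0 : V) ∈ P)
    (hP_order : ∀ p₁ ∈ P, ∀ p₂ ∈ P, ∀ lam ∈ Set.Icc (0 : ℝ) 1,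
      lam • p₁ ≤ lam • p₁ + (1 - lam) • p₂)
    (U : Set (Lp ℝ ⊤ η)) (hU_convex : Convex ℝ U) (hU_zero : (0 : Lp ℝ ⊤ η) ∈ U)
    (hU_nonneg : ∀ u ∈ U, 0 ≤ u)
    (S : V → Lp ℝ ⊤ η → Lp ℝ 2 μ)
    (hS_nonneg : ∀ p : V, ∀ u ∈ U, 0 ≤ S p u)
    (hS_mono_p : ∀ u ∈ U, ∀ p₁ p₂ : V, p₁ ≤ p₂ → S p₁ u ≤ S p₂ u)
    (hS_mono_u : ∀ p ∈ P, ∀ u₁ ∈ U, ∀ u₂ ∈ U, u₁ ≤ u₂ → S p u₁ ≤ S p u₂)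
    (hS_concave : ∀ p₁ ∈ P, ∀ p₂ ∈ P, ∀ u₁ ∈ U, ∀ u₂ ∈ U,
      ∀ lam ∈ Set.Icc (0 : ℝ) 1,
      lam • S p₁ u₁ + (1 - lam) • S p₂ u₂ ≤
        S (lam • p₁ + (1 - lam) • p₂) (lam • u₁ + (1 - lam) • u₂))
    (hS_top : ∀ p ∈ P, ∀ u ∈ U, MemLp (⇑(S p u)) ⊤ μ)
    (Φ : Lp ℝ 2 μ → V)
    (hΦ_mem : ∀ v, Φ v ∈ P)
    (hΦ_mono : ∀ v₁ v₂ : Lp ℝ 2 μ, v₁ ≤ v₂ → Φ v₁ ≤ Φ v₂)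
    (ε : ℝ) (hε : 0 < ε)
    (hΦ_concave : ∀ v₁ v₂ : Lp ℝ 2 μ,
      (∀ᵐ x ∂μ, -ε ≤ v₁ x) → (∀ᵐ x ∂μ, -ε ≤ v₂ x) →
      ∀ lam ∈ Set.Icc (0 : ℝ) 1,
      lam • Φ v₁ + (1 - lam) • Φ v₂ ≤ Φ (lam • v₁ + (1 - lam) • v₂))
    -- the exponent r ∈ [1, 2] with S(p, u) ∈ L^r(X)
    (r : ℝ≥0∞) (hr1 : 1 ≤ r) (hr2 : r ≤ 2)
    (hSr : ∀ p ∈ P, ∀ u ∈ U, MemLp (⇑(S p u)) r μ)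
    -- the (single-valued) solution map 𝕊 of the fixed-point problem (F)
    (Sol : Lp ℝ ⊤ η → Lp ℝ 2 μ)
    (hSol : ∀ w ∈ U, Sol w = S (Φ (Sol w)) w)
    (hSol_unique : ∀ w ∈ U, ∀ y : Lp ℝ 2 μ, y = S (Φ y) w → y = Sol w)
    -- the point u ∈ U ∩ L^∞_⊕(Y) and the direction h with u + τ₀ h ∈ U
    (u : Lp ℝ ⊤ η) (hu : u ∈ U)
    (c : ℝ) (hc : 0 < c) (huc : ∀ᵐ y ∂η, c ≤ u y)
    (h : Lp ℝ ⊤ η)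
    (hcone : ∃ lam : ℝ, 0 ≤ lam ∧ ∃ w ∈ U, h = lam • (w - u))
    (τ₀ : ℝ) (hτ₀ : 0 < τ₀) (hτ₀mem : u + τ₀ • h ∈ U)
    -- the directional derivative Ψ'((𝕊(u), u); (·, h)) of Ψ(v, u) := S(Φ(v), u)
    (DΨ : Lp ℝ 2 μ → X → EReal)
    (hDΨ : ∀ ζ : Lp ℝ 2 μ, MemLp (⇑ζ) ⊤ μ →
      ∀ τn : ℕ → ℝ, (∀ n, τn n ∈ Set.Ioo (0 : ℝ) τ₀) → Tendsto τn atTop (𝓝 0) →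
      ∀ᵐ x ∂μ, Tendsto
        (fun n =>
          ((((τn n)⁻¹ • (S (Φ (Sol u + τn n • ζ)) (u + τn n • h) - Sol u) :
            Lp ℝ 2 μ) x : ℝ) : EReal))
        atTop (𝓝 (DΨ ζ x)))
    -- the Hadamard directional derivative δ = 𝕊'(u; h) ∈ L^{[r,∞]}(X)
    (δ : Lp ℝ 2 μ) (hδr : MemLp (⇑δ) r μ) (hδtop : MemLp (⇑δ) ⊤ μ)
    (hδ : ∀ τn : ℕ → ℝ, (∀ n, 0 < τn n) → Tendsto τn atTop (𝓝 0) →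
      (∀ n, u + τn n • h ∈ U) →
      ∀ q : ℝ≥0∞, r ≤ q → q ≠ ⊤ →
        Tendsto
          (fun n => eLpNorm (⇑((τn n)⁻¹ • (Sol (u + τn n • h) - Sol u) - δ)) q μ)
          atTop (𝓝 0)) :
    IsLeast
      {ζ : Lp ℝ 2 μ |
        MemLp (⇑ζ) r μ ∧ MemLp (⇑ζ) ⊤ μ ∧
        ∃ (ζn : ℕ → Lp ℝ 2 μ) (τn : ℕ → ℝ),
          (∀ n, MemLp (⇑(ζn n)) r μ ∧ MemLp (⇑(ζn n)) ⊤ μ) ∧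
          (∀ n, ζn n ≤ ζn (n + 1)) ∧
          (∀ n, τn (n + 1) ≤ τn n) ∧
          (∀ n, τn n ∈ Set.Ioo (0 : ℝ) τ₀) ∧
          Tendsto τn atTop (𝓝 0) ∧
          (∀ q : ℝ≥0∞, r ≤ q → q ≠ ⊤ →
            Tendsto (fun n => eLpNorm (⇑(ζn n - ζ)) q μ) atTop (𝓝 0)) ∧
          (∀ n, S (Φ (Sol u + τn n • ζn n)) (u + τn n • h) ≤ Sol u + τn n • ζn n) ∧
          (∀ᵐ x ∂μ, Tendsto
            (fun n => DΨ (ζn n) x - (((ζn n) x : ℝ) : EReal))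
            atTop (𝓝 (0 : EReal)))}
      δ := by
  classical
  have hr0 : r ≠ 0 := (zero_lt_one.trans_le hr1).ne'
  have hrt : r ≠ ⊤ := (hr2.trans_lt (by norm_num)).ne
  -- membership of intermediate parameters
  have hmemU : ∀ τ : ℝ, 0 < τ → τ ≤ τ₀ → u + τ • h ∈ U := by
    intro τ h1 h2
    have hθ0 : (0:ℝ) ≤ τ / τ₀ := by positivity
    have hθ1 : τ / τ₀ ≤ 1 := by rw [div_le_one hτ₀]; exact h2
    have hmem := hU_convex hu hτ₀mem (by linarith : (0:ℝ) ≤ 1 - τ / τ₀) hθ0 (by ring)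
    have heq : (1 - τ / τ₀) • u + (τ / τ₀) • (u + τ₀ • h) = u + ((τ / τ₀) * τ₀) • h := by
      module
    rw [heq, div_mul_cancel₀ _ hτ₀.ne'] at hmem
    exact hmem
  -- basic facts about solutions
  have hSol0 : ∀ w, w ∈ U → 0 ≤ Sol w := fun w hw => by
    rw [hSol w hw]; exact hS_nonneg _ w hw
  have hSoltop : ∀ w, w ∈ U → MemLp (⇑(Sol w)) ⊤ μ := fun w hw => by
    rw [hSol w hw]; exact hS_top _ (hΦ_mem _) w hw
  have hSolr : ∀ w, w ∈ U → MemLp (⇑(Sol w)) r μ := fun w hw => by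
    rw [hSol w hw]; exact hSr _ (hΦ_mem _) w hw
  have hSolae : ∀ w, w ∈ U → ∀ᵐ x ∂μ, -ε ≤ (Sol w) x := fun w hw => by
    filter_upwards [(Lp.coeFn_nonneg (Sol w)).mpr (hSol0 w hw)] with x hx
    have : (0:ℝ) ≤ (Sol w) x := hx
    linarith
  -- MemLp of scalar combinations
  have hsmulsub_mem : ∀ (p : ℝ≥0∞) (a b : Lp ℝ 2 μ), MemLp ⇑a p μ → MemLp ⇑b p μ →
      ∀ cc : ℝ, MemLp ⇑(cc • (a - b)) p μ := by
    intro p a b ha hb cc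
    have he : (fun x => cc • (a x - b x)) =ᵐ[μ] ⇑(cc • (a - b)) := by
      filter_upwards [Lp.coeFn_smul cc (a - b), Lp.coeFn_sub a b] with x h1 h2
      rw [h1]
      simp only [Pi.smul_apply, h2, Pi.sub_apply]
    exact (memLp_congr_ae he).mp ((ha.sub hb).const_smul cc)
  have hcombo_mem : ∀ (p : ℝ≥0∞) (a b : Lp ℝ 2 μ), MemLp ⇑a p μ → MemLp ⇑b p μ →
      ∀ lam mu : ℝ, MemLp ⇑(lam • a + mu • b) p μ := by
    intro p a b ha hb lam mu
    have he : (fun x => lam • a x + mu • b x) =ᵐ[μ] ⇑(lam • a + mu • b) := by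
      filter_upwards [Lp.coeFn_add (lam • a) (mu • b), Lp.coeFn_smul lam a,
        Lp.coeFn_smul mu b] with x h1 h2 h3
      rw [h1]
      simp only [Pi.add_apply, h2, h3, Pi.smul_apply]
    exact (memLp_congr_ae he).mp ((ha.const_smul lam).add (hb.const_smul mu))
  have hcombo_nonneg : ∀ (a b : Lp ℝ 2 μ), 0 ≤ a → 0 ≤ b →
      ∀ lam mu : ℝ, 0 ≤ lam → 0 ≤ mu → 0 ≤ lam • a + mu • b := by
    intro a b ha hb lam mu hlam hmu
    rw [← Lp.coeFn_nonneg]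
    filter_upwards [(Lp.coeFn_nonneg a).mpr ha, (Lp.coeFn_nonneg b).mpr hb,
      Lp.coeFn_add (lam • a) (mu • b), Lp.coeFn_smul lam a, Lp.coeFn_smul mu b]
      with x h1 h2 h3 h4 h5
    have : (0:ℝ) ≤ a x := h1
    have : (0:ℝ) ≤ b x := h2
    simp only [Pi.zero_apply, h3, Pi.add_apply, h4, h5, Pi.smul_apply, smul_eq_mul]
    nlinarith
  -- Lemma C : a convex combination of two solutions is a subsolution
  have lemC : ∀ w₁, w₁ ∈ U → ∀ w₂, w₂ ∈ U → ∀ lam : ℝ, 0 ≤ lam → lam ≤ 1 →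
      lam • Sol w₁ + (1 - lam) • Sol w₂ ≤
        S (Φ (lam • Sol w₁ + (1 - lam) • Sol w₂)) (lam • w₁ + (1 - lam) • w₂) := by
    intro w₁ hw₁ w₂ hw₂ lam h0 h1
    have hWU : lam • w₁ + (1 - lam) • w₂ ∈ U :=
      hU_convex hw₁ hw₂ h0 (by linarith) (by ring)
    have hΦc := hΦ_concave (Sol w₁) (Sol w₂) (hSolae w₁ hw₁) (hSolae w₂ hw₂) lam ⟨h0, h1⟩
    have hSm := hS_mono_p _ hWU _ _ hΦc
    have hSc := hS_concave (Φ (Sol w₁)) (hΦ_mem _) (Φ (Sol w₂)) (hΦ_mem _)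
      w₁ hw₁ w₂ hw₂ lam ⟨h0, h1⟩
    rw [← hSol w₁ hw₁, ← hSol w₂ hw₂] at hSc
    exact hSc.trans hSm
  -- Lemma D : the solution map is concave (via the subsolution comparison principle)
  have lemD : ∀ w₁, w₁ ∈ U → ∀ w₂, w₂ ∈ U → ∀ lam : ℝ, 0 ≤ lam → lam ≤ 1 →
      lam • Sol w₁ + (1 - lam) • Sol w₂ ≤ Sol (lam • w₁ + (1 - lam) • w₂) := by
    intro w₁ hw₁ w₂ hw₂ lam h0 h1
    have hWU : lam • w₁ + (1 - lam) • w₂ ∈ U :=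
      hU_convex hw₁ hw₂ h0 (by linarith) (by ring)
    refine Stmt13Aux.subsolution_le_fixedpoint
      (fun z => S (Φ z) (lam • w₁ + (1 - lam) • w₂))
      (fun a b hab => hS_mono_p _ hWU _ _ (hΦ_mono a b hab))
      (fun a => hS_nonneg _ _ hWU) hε
      (fun a b ha hb lam' h0' h1' => ?_)
      (Sol (lam • w₁ + (1 - lam) • w₂)) (hSol _ hWU).symm
      (fun z hz => hSol_unique _ hWU z hz.symm)
      (hSoltop _ hWU) _ (lemC w₁ hw₁ w₂ hw₂ lam h0 h1)
      (hcombo_nonneg _ _ (hSol0 w₁ hw₁) (hSol0 w₂ hw₂) lam (1 - lam) h0 (by linarith))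
      (hcombo_mem ⊤ _ _ (hSoltop w₁ hw₁) (hSoltop w₂ hw₂) lam (1 - lam))
    · have h2 := hΦ_concave a b ha hb lam' ⟨h0', h1'⟩
      have h3 := hS_mono_p _ hWU _ _ h2
      have h4 := hS_concave (Φ a) (hΦ_mem a) (Φ b) (hΦ_mem b) _ hWU _ hWU lam' ⟨h0', h1'⟩
      have h5 : lam' • (lam • w₁ + (1 - lam) • w₂) + (1 - lam') • (lam • w₁ + (1 - lam) • w₂)
          = lam • w₁ + (1 - lam) • w₂ := by module
      rw [h5] at h4
      exact h4.trans h3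
  -- pointwise monotonicity of difference quotients
  have hquot_mono : ∀ τ' τ : ℝ, 0 < τ' → τ' ≤ τ → τ ≤ τ₀ →
      ∀ᵐ x ∂μ, τ⁻¹ * ((Sol (u + τ • h)) x - (Sol u) x)
        ≤ (τ')⁻¹ * ((Sol (u + τ' • h)) x - (Sol u) x) := by
    intro τ' τ h1 h2 h3
    have hτp : (0:ℝ) < τ := lt_of_lt_of_le h1 h2
    have h0 : (0:ℝ) ≤ τ' * τ⁻¹ := by positivity
    have hl1 : τ' * τ⁻¹ ≤ 1 := by
      rw [← div_eq_mul_inv, div_le_one hτp]; exact h2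
    have hcomb := lemD (u + τ • h) (hmemU τ hτp h3) u hu (τ' * τ⁻¹) h0 hl1
    have hlam : (τ' * τ⁻¹) * τ = τ' := by field_simp
    have heq : (τ' * τ⁻¹) • (u + τ • h) + (1 - τ' * τ⁻¹) • u = u + ((τ' * τ⁻¹) * τ) • h := by
      module
    rw [heq, hlam] at hcomb
    have hae := (Lp.coeFn_le _ _).mpr hcomb
    filter_upwards [hae,
      Lp.coeFn_add ((τ' * τ⁻¹) • Sol (u + τ • h)) ((1 - τ' * τ⁻¹) • Sol u),
      Lp.coeFn_smul (τ' * τ⁻¹ : ℝ) (Sol (u + τ • h)),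
      Lp.coeFn_smul (1 - τ' * τ⁻¹ : ℝ) (Sol u)] with x hx h4 h5 h6
    rw [h4] at hx
    simp only [Pi.add_apply, h5, h6, Pi.smul_apply, smul_eq_mul] at hx
    -- hx : τ'τ⁻¹ * sτ x + (1 - τ'τ⁻¹) * y x ≤ s' x
    set a : ℝ := (Sol (u + τ • h)) x - (Sol u) x with hadef
    set b : ℝ := (Sol (u + τ' • h)) x - (Sol u) x with hbdef
    have e1 : τ' * τ⁻¹ * a ≤ b := by
      rw [hadef, hbdef]; ring_nf; ring_nf at hx; linarith
    have hid : τ⁻¹ * τ = 1 := inv_mul_cancel₀ hτp.ne'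
    have hid' : (τ')⁻¹ * τ' = 1 := inv_mul_cancel₀ h1.ne'
    have e2 : τ⁻¹ * a = (τ')⁻¹ * (τ' * τ⁻¹ * a) := by
      field_simp
    rw [e2]
    exact mul_le_mul_of_nonneg_left e1 (by positivity)
  -- the master sequence of parameters
  set τseq : ℕ → ℝ := fun n => τ₀ * ((1:ℝ)/2) ^ (n + 1) with hτseq
  have hτpos : ∀ n, 0 < τseq n := fun n => by rw [hτseq]; positivity
  have hτle : ∀ n m, n ≤ m → τseq m ≤ τseq n := by
    intro n m hnm
    rw [hτseq]
    exact mul_le_mul_of_nonneg_left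
      (pow_le_pow_of_le_one (by norm_num) (by norm_num) (by omega)) hτ₀.le
  have hτlt : ∀ n, τseq n < τ₀ := by
    intro n
    rw [hτseq]
    have h1 : ((1:ℝ)/2) ^ (n + 1) ≤ (1:ℝ)/2 := by
      calc ((1:ℝ)/2) ^ (n + 1) ≤ ((1:ℝ)/2) ^ 1 :=
            pow_le_pow_of_le_one (by norm_num) (by norm_num) (by omega)
        _ = (1:ℝ)/2 := pow_one _
    nlinarith
  have hτtend : Tendsto τseq atTop (𝓝 0) := by
    rw [hτseq]
    have h1 : Tendsto (fun n : ℕ => ((1:ℝ)/2) ^ n) atTop (𝓝 0) :=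
      tendsto_pow_atTop_nhds_zero_of_lt_one (by norm_num) (by norm_num)
    have h2 : Tendsto (fun n : ℕ => ((1:ℝ)/2) ^ (n + 1)) atTop (𝓝 0) :=
      h1.comp (tendsto_add_atTop_nat 1)
    have h3 := h2.const_mul τ₀
    simpa using h3
  have hUseq : ∀ n, u + τseq n • h ∈ U := fun n => hmemU _ (hτpos n) (hτlt n).le
  -- the master sequence of difference quotients
  set ζseq : ℕ → Lp ℝ 2 μ := fun n => (τseq n)⁻¹ • (Sol (u + τseq n • h) - Sol u) with hζseq
  have hζcoe : ∀ n, ∀ᵐ x ∂μ,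
      (ζseq n) x = (τseq n)⁻¹ * ((Sol (u + τseq n • h)) x - (Sol u) x) := by
    intro n
    have h1 : ζseq n = (τseq n)⁻¹ • (Sol (u + τseq n • h) - Sol u) := by rw [hζseq]
    rw [h1]
    filter_upwards [Lp.coeFn_smul ((τseq n)⁻¹ : ℝ) (Sol (u + τseq n • h) - Sol u),
      Lp.coeFn_sub (Sol (u + τseq n • h)) (Sol u)] with x h2 h3
    rw [h2]
    simp only [Pi.smul_apply, smul_eq_mul, h3, Pi.sub_apply]
  have hζmem : ∀ n, MemLp ⇑(ζseq n) r μ ∧ MemLp ⇑(ζseq n) ⊤ μ := by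
    intro n
    constructor
    · exact hsmulsub_mem r _ _ (hSolr _ (hUseq n)) (hSolr u hu) _
    · exact hsmulsub_mem ⊤ _ _ (hSoltop _ (hUseq n)) (hSoltop u hu) _
  have hζmono : ∀ n, ζseq n ≤ ζseq (n + 1) := by
    intro n
    rw [← Lp.coeFn_le]
    filter_upwards [hquot_mono (τseq (n+1)) (τseq n) (hτpos (n+1)) (hτle n (n+1) (by omega))
      (hτlt n).le, hζcoe n, hζcoe (n+1)] with x h1 h2 h3
    rw [h2, h3]
    exact h1
  -- L^q convergence of the master difference quotients
  have hδconv : ∀ q : ℝ≥0∞, r ≤ q → q ≠ ⊤ →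
      Tendsto (fun n => eLpNorm ⇑(ζseq n - δ) q μ) atTop (𝓝 0) :=
    fun q hq hq' => hδ τseq hτpos hτtend hUseq q hq hq'
  -- a.e.-convergent subsequences from L^r convergence
  have haesub : ∀ (f : ℕ → Lp ℝ 2 μ) (g : Lp ℝ 2 μ),
      Tendsto (fun n => eLpNorm ⇑(f n - g) r μ) atTop (𝓝 0) →
      ∃ φ : ℕ → ℕ, StrictMono φ ∧
        ∀ᵐ x ∂μ, Tendsto (fun k => (f (φ k)) x) atTop (𝓝 (g x)) := by
    intro f g hconv
    have h1 : Tendsto (fun n => eLpNorm (⇑(f n) - ⇑g) r μ) atTop (𝓝 0) := by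
      have he : ∀ n, eLpNorm (⇑(f n) - ⇑g) r μ = eLpNorm ⇑(f n - g) r μ := fun n =>
        eLpNorm_congr_ae (Lp.coeFn_sub (f n) g).symm
      exact hconv.congr fun n => (he n).symm
    have h2 : TendstoInMeasure μ (fun n => ⇑(f n)) atTop ⇑g :=
      tendstoInMeasure_of_tendsto_eLpNorm hr0
        (fun n => Lp.aestronglyMeasurable _) (Lp.aestronglyMeasurable _) h1
    exact h2.exists_seq_tendsto_ae
  -- full a.e. monotone convergence of the master sequence to δ
  obtain ⟨φ, hφmono, hφae⟩ := haesub ζseq δ (hδconv r le_rfl hrt)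
  have hζae_mono : ∀ᵐ x ∂μ, ∀ n, (ζseq n) x ≤ (ζseq (n+1)) x := by
    rw [ae_all_iff]; exact fun n => (Lp.coeFn_le _ _).mpr (hζmono n)
  have hζfull : ∀ᵐ x ∂μ,
      Tendsto (fun n => (ζseq n) x) atTop (𝓝 (δ x)) ∧ ∀ n, (ζseq n) x ≤ δ x := by
    filter_upwards [hφae, hζae_mono] with x h1 h2
    have hmon : Monotone fun n => (ζseq n) x := monotone_nat_of_le_succ h2
    have ht := Stmt13Aux.tendsto_of_monotone_of_subseq hmon hφmono h1
    exact ⟨ht, fun n => hmon.ge_of_tendsto ht n⟩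
  -- key bounds : ζseq n ≤ DΨ (ζseq n) ≤ δ a.e.
  have hDbound : ∀ n, ∀ᵐ x ∂μ,
      (((ζseq n) x : ℝ) : EReal) ≤ DΨ (ζseq n) x ∧ DΨ (ζseq n) x ≤ ((δ x : ℝ) : EReal) := by
    intro n
    have hσIoo : ∀ k, τseq (k + (n+1)) ∈ Set.Ioo (0:ℝ) τ₀ :=
      fun k => ⟨hτpos _, hτlt _⟩
    have hσtend : Tendsto (fun k => τseq (k + (n+1))) atTop (𝓝 0) :=
      hτtend.comp (tendsto_add_atTop_nat (n+1))
    have hDΨn := hDΨ (ζseq n) (hζmem n).2 (fun k => τseq (k + (n+1))) hσIoo hσtend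
    -- Lp-level lower bound: Sol u + σ • ζseq n is a subsolution
    have hlowLp : ∀ k, Sol u + τseq (k + (n+1)) • ζseq n ≤
        S (Φ (Sol u + τseq (k + (n+1)) • ζseq n)) (u + τseq (k + (n+1)) • h) := by
      intro k
      set σ : ℝ := τseq (k + (n+1)) with hσdef
      have hσpos : 0 < σ := hτpos _
      have hσle : σ ≤ τseq n := hτle n (k + (n+1)) (by omega)
      have h0 : (0:ℝ) ≤ σ * (τseq n)⁻¹ := by positivity
      have h1 : σ * (τseq n)⁻¹ ≤ 1 := by
        rw [← div_eq_mul_inv, div_le_one (hτpos n)]; exact hσle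
      have hC := lemC (u + τseq n • h) (hUseq n) u hu (σ * (τseq n)⁻¹) h0 h1
      have hlam : (σ * (τseq n)⁻¹) * τseq n = σ := by
        field_simp [(hτpos n).ne']
      have hparam : (σ * (τseq n)⁻¹) • (u + τseq n • h) + (1 - σ * (τseq n)⁻¹) • u
          = u + ((σ * (τseq n)⁻¹) * τseq n) • h := by module
      rw [hparam, hlam] at hC
      have hcombo : (σ * (τseq n)⁻¹) • Sol (u + τseq n • h)
            + (1 - σ * (τseq n)⁻¹) • Sol u
          = Sol u + σ • ζseq n := by
        have h2 : ζseq n = (τseq n)⁻¹ • (Sol (u + τseq n • h) - Sol u) := by rw [hζseq]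
        rw [h2]
        module
      rw [hcombo] at hC
      exact hC
    -- Lp-level upper bound : the image is below the next solution
    have hupLp : ∀ k, S (Φ (Sol u + τseq (k + (n+1)) • ζseq n)) (u + τseq (k + (n+1)) • h)
        ≤ Sol (u + τseq (k + (n+1)) • h) := by
      intro k
      set σ : ℝ := τseq (k + (n+1)) with hσdef
      have hσpos : 0 < σ := hτpos _
      have hσle : σ ≤ τseq n := hτle n (k + (n+1)) (by omega)
      have hle1 : Sol u + σ • ζseq n ≤ Sol (u + σ • h) := by
        rw [← Lp.coeFn_le]
        filter_upwards [hquot_mono σ (τseq n) hσpos hσle (hτlt n).le, hζcoe n,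
          Lp.coeFn_add (Sol u) (σ • ζseq n), Lp.coeFn_smul (σ : ℝ) (ζseq n)]
          with x h1 h2 h3 h4
        rw [h3]
        simp only [Pi.add_apply, h4, Pi.smul_apply, smul_eq_mul]
        rw [h2]
        have hid : σ⁻¹ * σ = 1 := inv_mul_cancel₀ hσpos.ne'
        have h5 : σ * (σ⁻¹ * ((Sol (u + σ • h)) x - (Sol u) x))
            = (σ * σ⁻¹) * ((Sol (u + σ • h)) x - (Sol u) x) := by ring
        have h6 : σ * ((τseq n)⁻¹ * ((Sol (u + τseq n • h)) x - (Sol u) x))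
            ≤ σ * (σ⁻¹ * ((Sol (u + σ • h)) x - (Sol u) x)) :=
          mul_le_mul_of_nonneg_left h1 hσpos.le
        rw [h5] at h6
        rw [mul_inv_cancel₀ hσpos.ne'] at h6
        linarith
      have h7 := hS_mono_p _ (hUseq (k + (n+1))) _ _ (hΦ_mono _ _ hle1)
      calc S (Φ (Sol u + σ • ζseq n)) (u + σ • h)
          ≤ S (Φ (Sol (u + σ • h))) (u + σ • h) := h7
        _ = Sol (u + σ • h) := (hSol _ (hUseq (k + (n+1)))).symm
    -- pointwise representations
    have hQcoe : ∀ k, ∀ᵐ x ∂μ,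
        ((τseq (k + (n+1)))⁻¹ • (S (Φ (Sol u + τseq (k + (n+1)) • ζseq n))
            (u + τseq (k + (n+1)) • h) - Sol u) : Lp ℝ 2 μ) x
          = (τseq (k + (n+1)))⁻¹ * ((S (Φ (Sol u + τseq (k + (n+1)) • ζseq n))
            (u + τseq (k + (n+1)) • h)) x - (Sol u) x) := by
      intro k
      filter_upwards [Lp.coeFn_smul ((τseq (k + (n+1)))⁻¹ : ℝ)
          (S (Φ (Sol u + τseq (k + (n+1)) • ζseq n)) (u + τseq (k + (n+1)) • h) - Sol u),
        Lp.coeFn_sub (S (Φ (Sol u + τseq (k + (n+1)) • ζseq n))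
          (u + τseq (k + (n+1)) • h)) (Sol u)] with x h1 h2
      rw [h1]
      simp only [Pi.smul_apply, smul_eq_mul, h2, Pi.sub_apply]
    have hlowae : ∀ k, ∀ᵐ x ∂μ,
        (Sol u) x + τseq (k + (n+1)) * (ζseq n) x
          ≤ (S (Φ (Sol u + τseq (k + (n+1)) • ζseq n)) (u + τseq (k + (n+1)) • h)) x := by
      intro k
      filter_upwards [(Lp.coeFn_le _ _).mpr (hlowLp k),
        Lp.coeFn_add (Sol u) (τseq (k + (n+1)) • ζseq n),
        Lp.coeFn_smul (τseq (k + (n+1)) : ℝ) (ζseq n)] with x h1 h2 h3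
      rw [h2] at h1
      simp only [Pi.add_apply, h3, Pi.smul_apply, smul_eq_mul] at h1
      exact h1
    have hupae : ∀ k, ∀ᵐ x ∂μ,
        (S (Φ (Sol u + τseq (k + (n+1)) • ζseq n)) (u + τseq (k + (n+1)) • h)) x
          ≤ (Sol (u + τseq (k + (n+1)) • h)) x := fun k =>
      (Lp.coeFn_le _ _).mpr (hupLp k)
    -- assemble
    filter_upwards [hDΨn, ae_all_iff.mpr hQcoe, ae_all_iff.mpr hlowae, ae_all_iff.mpr hupae,
      ae_all_iff.mpr hζcoe, hζfull] with x hx hQx hlx hux hζx hfx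
    have hQlow : ∀ k, (ζseq n) x ≤ ((τseq (k + (n+1)))⁻¹ •
        (S (Φ (Sol u + τseq (k + (n+1)) • ζseq n)) (u + τseq (k + (n+1)) • h) - Sol u)
          : Lp ℝ 2 μ) x := by
      intro k
      rw [hQx k]
      have hσpos : (0:ℝ) < τseq (k + (n+1)) := hτpos _
      have h6 : 0 ≤ (S (Φ (Sol u + τseq (k + (n+1)) • ζseq n))
          (u + τseq (k + (n+1)) • h)) x - (Sol u) x - τseq (k + (n+1)) * (ζseq n) x := by
        have := hlx k; linarith
      have h7 := mul_nonneg (inv_nonneg.mpr hσpos.le) h6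
      have hid : (τseq (k + (n+1)))⁻¹ * τseq (k + (n+1)) = 1 := inv_mul_cancel₀ hσpos.ne'
      set A : ℝ := (S (Φ (Sol u + τseq (k + (n+1)) • ζseq n))
        (u + τseq (k + (n+1)) • h)) x with hA
      have h8 : (τseq (k + (n+1)))⁻¹ * (A - (Sol u) x) - (ζseq n) x
          = (τseq (k + (n+1)))⁻¹ * (A - (Sol u) x - τseq (k + (n+1)) * (ζseq n) x)
            + ((τseq (k + (n+1)))⁻¹ * τseq (k + (n+1)) - 1) * (ζseq n) x := by ring
      rw [hid] at h8
      simp only [sub_self, zero_mul, add_zero] at h8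
      linarith
    have hQup : ∀ k, ((τseq (k + (n+1)))⁻¹ •
        (S (Φ (Sol u + τseq (k + (n+1)) • ζseq n)) (u + τseq (k + (n+1)) • h) - Sol u)
          : Lp ℝ 2 μ) x ≤ (ζseq (k + (n+1))) x := by
      intro k
      rw [hQx k, hζx (k + (n+1))]
      have hσpos : (0:ℝ) < τseq (k + (n+1)) := hτpos _
      exact mul_le_mul_of_nonneg_left (by have := hux k; linarith)
        (inv_nonneg.mpr hσpos.le)
    constructor
    · refine ge_of_tendsto hx (Eventually.of_forall fun k => ?_)
      exact EReal.coe_le_coe_iff.mpr (hQlow k)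
    · have htop : Tendsto (fun k => (((ζseq (k + (n+1))) x : ℝ) : EReal)) atTop
          (𝓝 ((δ x : ℝ) : EReal)) := by
        rw [EReal.tendsto_coe]
        exact hfx.1.comp (tendsto_add_atTop_nat (n+1))
      exact le_of_tendsto_of_tendsto' hx htop fun k => EReal.coe_le_coe_iff.mpr (hQup k)
  -- the DΨ-condition for the master sequence
  have hDψ0 : ∀ᵐ x ∂μ, Tendsto
      (fun n => DΨ (ζseq n) x - (((ζseq n) x : ℝ) : EReal)) atTop (𝓝 (0 : EReal)) := by
    filter_upwards [ae_all_iff.mpr hDbound, hζfull] with x hx hfx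
    have hfin : ∀ n, ∃ rn : ℝ, DΨ (ζseq n) x = (rn : EReal)
        ∧ (ζseq n) x ≤ rn ∧ rn ≤ δ x := by
      intro n
      have h1 := (hx n).1
      have h2 := (hx n).2
      have hne1 : DΨ (ζseq n) x ≠ ⊤ := ne_top_of_le_ne_top (EReal.coe_ne_top _) h2
      have hne2 : DΨ (ζseq n) x ≠ ⊥ := by
        intro hbot
        rw [hbot] at h1
        exact absurd h1 (by simp)
      refine ⟨(DΨ (ζseq n) x).toReal, (EReal.coe_toReal hne1 hne2).symm, ?_, ?_⟩
      · have := h1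
        rw [← EReal.coe_toReal hne1 hne2] at this
        exact EReal.coe_le_coe_iff.mp this
      · have := h2
        rw [← EReal.coe_toReal hne1 hne2] at this
        exact EReal.coe_le_coe_iff.mp this
    choose rn hrn1 hrn2 hrn3 using hfin
    have heq : (fun n => DΨ (ζseq n) x - (((ζseq n) x : ℝ) : EReal))
        = fun n => (((rn n - (ζseq n) x : ℝ)) : EReal) := by
      funext n
      rw [hrn1 n, ← EReal.coe_sub]
    rw [heq]
    have h0 : (0 : EReal) = ((0:ℝ) : EReal) := rfl
    rw [h0, EReal.tendsto_coe]
    have hup2 : Tendsto (fun n => δ x - (ζseq n) x) atTop (𝓝 0) := by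
      have hcst : Tendsto (fun _ : ℕ => (δ x : ℝ)) atTop (𝓝 (δ x)) := tendsto_const_nhds
      have := hcst.sub hfx.1
      simpa using this
    refine tendsto_of_tendsto_of_tendsto_of_le_of_le
      (tendsto_const_nhds : Tendsto (fun _ : ℕ => (0:ℝ)) atTop (𝓝 0)) hup2
      (fun n => by have := hrn2 n; linarith)
      (fun n => by have := hrn3 n; have := hfx.2 n; linarith)
  -- the supersolution property (with equality) for the master sequence
  have hsupeq : ∀ n, S (Φ (Sol u + τseq n • ζseq n)) (u + τseq n • h)
      ≤ Sol u + τseq n • ζseq n := by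
    intro n
    have hrep : Sol u + τseq n • ζseq n = Sol (u + τseq n • h) := by
      have h2 : ζseq n = (τseq n)⁻¹ • (Sol (u + τseq n • h) - Sol u) := by rw [hζseq]
      rw [h2, smul_smul, mul_inv_cancel₀ (hτpos n).ne', one_smul]
      abel
    rw [hrep]
    exact le_of_eq (hSol _ (hUseq n)).symm
  constructor
  · -- membership of δ
    exact ⟨hδr, hδtop, ζseq, τseq, hζmem, hζmono,
      fun n => hτle n (n+1) (by omega), fun n => ⟨hτpos n, hτlt n⟩, hτtend,
      hδconv, hsupeq, hDψ0⟩
  · -- lower bound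
    rintro ζ ⟨hζr', hζtop', ζn, τn, hmemn, hmono', hτdec, hτIoo, hτ00, hconvn, hsupern, hDcond⟩
    have hUτ : ∀ n, u + τn n • h ∈ U := fun n => hmemU _ (hτIoo n).1 (hτIoo n).2.le
    have hcompn : ∀ n, Sol (u + τn n • h) ≤ Sol u + τn n • ζn n := by
      intro n
      exact Stmt13Aux.fixedpoint_le_supersolution
        (fun z => S (Φ z) (u + τn n • h))
        (fun a b hab => hS_mono_p _ (hUτ n) _ _ (hΦ_mono a b hab))
        (fun a => hS_nonneg _ _ (hUτ n))
        (Sol (u + τn n • h)) (hSol _ (hUτ n)).symm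
        (fun z hz => hSol_unique _ (hUτ n) z hz.symm)
        (Sol u + τn n • ζn n) (hsupern n)
    have hquotn : ∀ n, ∀ᵐ x ∂μ,
        ((τn n)⁻¹ • (Sol (u + τn n • h) - Sol u) : Lp ℝ 2 μ) x ≤ (ζn n) x := by
      intro n
      have hσpos : (0:ℝ) < τn n := (hτIoo n).1
      filter_upwards [(Lp.coeFn_le _ _).mpr (hcompn n),
        Lp.coeFn_smul ((τn n)⁻¹ : ℝ) (Sol (u + τn n • h) - Sol u),
        Lp.coeFn_sub (Sol (u + τn n • h)) (Sol u),
        Lp.coeFn_add (Sol u) (τn n • ζn n),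
        Lp.coeFn_smul (τn n : ℝ) (ζn n)] with x h1 h2 h3 h4 h5
      rw [h2]
      simp only [Pi.smul_apply, smul_eq_mul, h3, Pi.sub_apply]
      rw [h4] at h1
      simp only [Pi.add_apply, h5, Pi.smul_apply, smul_eq_mul] at h1
      -- h1 : Sol (u + τn n • h) x ≤ Sol u x + τn n * ζn n x
      have h6 : (Sol (u + τn n • h)) x - (Sol u) x ≤ τn n * (ζn n) x := by linarith
      have h7 := mul_le_mul_of_nonneg_left h6 (inv_nonneg.mpr hσpos.le)
      rw [← mul_assoc, inv_mul_cancel₀ hσpos.ne', one_mul] at h7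
      exact h7
    have hDconv := hδ τn (fun n => (hτIoo n).1) hτ00 hUτ r le_rfl hrt
    obtain ⟨φ₁, hφ₁, hae1⟩ :=
      haesub (fun n => (τn n)⁻¹ • (Sol (u + τn n • h) - Sol u)) δ hDconv
    have hconv2 : Tendsto (fun k => eLpNorm ⇑(ζn (φ₁ k) - ζ) r μ) atTop (𝓝 0) :=
      (hconvn r le_rfl hrt).comp hφ₁.tendsto_atTop
    obtain ⟨φ₂, hφ₂, hae2⟩ := haesub (fun k => ζn (φ₁ k)) ζ hconv2
    rw [← Lp.coeFn_le]
    filter_upwards [hae1, hae2, ae_all_iff.mpr hquotn] with x h1 h2 h3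
    exact le_of_tendsto_of_tendsto' (h1.comp hφ₂.tendsto_atTop) h2
      fun j => h3 (φ₁ (φ₂ j))
end

section
/- Suppose Assumption (C) holds, let r ∈ [1, 2] satisfy S(p, u) ∈ L^r(X) for all p ∈ P, u ∈ U, let 𝕊(u) be the unique solution of (F) with parameter u, let u ∈ U ∩ L^∞_⊕(Y), and let h ∈ ℝ⁺(U − u) satisfy u + τ₀h ∈ U for some τ₀ > 0. Then the set ℬ := {ζ ∈ L^{[r,∞]}(X) : ζ = Ψ'((𝕊(u), u); (ζ, h)) μ-a.e. in X} is contained in the set 𝒜 of all ζ ∈ L^{[r,∞]}(X) for which there exist sequences {ζ_n} ⊂ L^{[r,∞]}(X) and {τ_n} ⊂ (0, τ₀) with: ζ_n ≤ ζ_{n+1} and τ_{n+1} ≤ τ_n for all n; τ_n → 0; ζ_n → ζ in L^q(X) for all q ∈ [r, ∞); 𝕊(u) + τ_n ζ_n a supersolution of (F) with parameter u + τ_n h for all n; and Ψ'((𝕊(u), u); (ζ_n, h)) − ζ_n → 0 μ-a.e. in X. -/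
open MeasureTheory Filter Topology ENNReal

set_option maxHeartbeats 1000000 in
/-- Theorem 5.4 of the paper, inclusion `ℬ ⊆ 𝒜`: under Assumption (C),
the solution set `ℬ` of the linearized fixed-point equation
`ζ = Ψ'((𝕊(u), u); (ζ, h))` is contained in the set `𝒜` of "limiting" solutions. -/
theorem stmt_14
    {X : Type*} [MeasurableSpace X] {μ : Measure X} [μ.IsComplete]
    {Y : Type*} [MeasurableSpace Y] {η : Measure Y} [η.IsComplete]
    {V : Type*} [AddCommGroup V] [PartialOrder V] [Module ℝ V]
    (P : Set V) (hP_convex : Convex ℝ P) (hP_zero : (0 : V) ∈ P)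
    (hP_order : ∀ p₁ ∈ P, ∀ p₂ ∈ P, ∀ lam ∈ Set.Icc (0 : ℝ) 1,
      lam • p₁ ≤ lam • p₁ + (1 - lam) • p₂)
    (U : Set (Lp ℝ ⊤ η)) (hU_convex : Convex ℝ U) (hU_zero : (0 : Lp ℝ ⊤ η) ∈ U)
    (hU_nonneg : ∀ u ∈ U, 0 ≤ u)
    (S : V → Lp ℝ ⊤ η → Lp ℝ 2 μ)
    (hS_nonneg : ∀ p : V, ∀ u ∈ U, 0 ≤ S p u)
    (hS_mono_p : ∀ u ∈ U, ∀ p₁ p₂ : V, p₁ ≤ p₂ → S p₁ u ≤ S p₂ u)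
    (hS_mono_u : ∀ p ∈ P, ∀ u₁ ∈ U, ∀ u₂ ∈ U, u₁ ≤ u₂ → S p u₁ ≤ S p u₂)
    (hS_concave : ∀ p₁ ∈ P, ∀ p₂ ∈ P, ∀ u₁ ∈ U, ∀ u₂ ∈ U,
      ∀ lam ∈ Set.Icc (0 : ℝ) 1,
      lam • S p₁ u₁ + (1 - lam) • S p₂ u₂ ≤
        S (lam • p₁ + (1 - lam) • p₂) (lam • u₁ + (1 - lam) • u₂))
    (hS_top : ∀ p ∈ P, ∀ u ∈ U, MemLp (⇑(S p u)) ⊤ μ)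
    (Φ : Lp ℝ 2 μ → V)
    (hΦ_mem : ∀ v, Φ v ∈ P)
    (hΦ_mono : ∀ v₁ v₂ : Lp ℝ 2 μ, v₁ ≤ v₂ → Φ v₁ ≤ Φ v₂)
    (ε : ℝ) (hε : 0 < ε)
    (hΦ_concave : ∀ v₁ v₂ : Lp ℝ 2 μ,
      (∀ᵐ x ∂μ, -ε ≤ v₁ x) → (∀ᵐ x ∂μ, -ε ≤ v₂ x) →
      ∀ lam ∈ Set.Icc (0 : ℝ) 1,
      lam • Φ v₁ + (1 - lam) • Φ v₂ ≤ Φ (lam • v₁ + (1 - lam) • v₂))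
    -- the exponent r ∈ [1, 2] with S(p, u) ∈ L^r(X)
    (r : ℝ≥0∞) (hr1 : 1 ≤ r) (hr2 : r ≤ 2)
    (hSr : ∀ p ∈ P, ∀ u ∈ U, MemLp (⇑(S p u)) r μ)
    -- the (single-valued) solution map 𝕊 of the fixed-point problem (F)
    (Sol : Lp ℝ ⊤ η → Lp ℝ 2 μ)
    (hSol : ∀ w ∈ U, Sol w = S (Φ (Sol w)) w)
    (hSol_unique : ∀ w ∈ U, ∀ y : Lp ℝ 2 μ, y = S (Φ y) w → y = Sol w)
    -- the point u ∈ U ∩ L^∞_⊕(Y) and the direction h with u + τ₀ h ∈ U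
    (u : Lp ℝ ⊤ η) (hu : u ∈ U)
    (c : ℝ) (hc : 0 < c) (huc : ∀ᵐ y ∂η, c ≤ u y)
    (h : Lp ℝ ⊤ η)
    (hcone : ∃ lam : ℝ, 0 ≤ lam ∧ ∃ w ∈ U, h = lam • (w - u))
    (τ₀ : ℝ) (hτ₀ : 0 < τ₀) (hτ₀mem : u + τ₀ • h ∈ U)
    -- the directional derivative Ψ'((𝕊(u), u); (·, h)) of Ψ(v, u) := S(Φ(v), u)
    (DΨ : Lp ℝ 2 μ → X → EReal)
    (hDΨ : ∀ ζ : Lp ℝ 2 μ, MemLp (⇑ζ) ⊤ μ →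
      ∀ τn : ℕ → ℝ, (∀ n, τn n ∈ Set.Ioo (0 : ℝ) τ₀) → Tendsto τn atTop (𝓝 0) →
      ∀ᵐ x ∂μ, Tendsto
        (fun n =>
          ((((τn n)⁻¹ • (S (Φ (Sol u + τn n • ζ)) (u + τn n • h) - Sol u) :
            Lp ℝ 2 μ) x : ℝ) : EReal))
        atTop (𝓝 (DΨ ζ x))) :
    {ζ : Lp ℝ 2 μ |
      MemLp (⇑ζ) r μ ∧ MemLp (⇑ζ) ⊤ μ ∧
      ∀ᵐ x ∂μ, DΨ ζ x = ((ζ x : ℝ) : EReal)} ⊆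
      {ζ : Lp ℝ 2 μ |
        MemLp (⇑ζ) r μ ∧ MemLp (⇑ζ) ⊤ μ ∧
        ∃ (ζn : ℕ → Lp ℝ 2 μ) (τn : ℕ → ℝ),
          (∀ n, MemLp (⇑(ζn n)) r μ ∧ MemLp (⇑(ζn n)) ⊤ μ) ∧
          (∀ n, ζn n ≤ ζn (n + 1)) ∧
          (∀ n, τn (n + 1) ≤ τn n) ∧
          (∀ n, τn n ∈ Set.Ioo (0 : ℝ) τ₀) ∧
          Tendsto τn atTop (𝓝 0) ∧
          (∀ q : ℝ≥0∞, r ≤ q → q ≠ ⊤ →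
            Tendsto (fun n => eLpNorm (⇑(ζn n - ζ)) q μ) atTop (𝓝 0)) ∧
          (∀ n, S (Φ (Sol u + τn n • ζn n)) (u + τn n • h) ≤ Sol u + τn n • ζn n) ∧
          (∀ᵐ x ∂μ, Tendsto
            (fun n => DΨ (ζn n) x - (((ζn n) x : ℝ) : EReal))
            atTop (𝓝 (0 : EReal)))} := by
  intro ζ hζ
  obtain ⟨hζr, hζi, hζeq⟩ := hζ
  refine ⟨hζr, hζi, ?_⟩
  set y : Lp ℝ 2 μ := Sol u with hy
  have hyfix : y = S (Φ y) u := hSol u hu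
  -- y ≥ 0 a.e.
  have hy0 : (0 : Lp ℝ 2 μ) ≤ y := by rw [hyfix]; exact hS_nonneg _ u hu
  have hy0ae : ∀ᵐ x ∂μ, 0 ≤ y x := (Lp.coeFn_nonneg y).mpr hy0
  -- essential bound on ζ
  set M : ℝ := (eLpNormEssSup (⇑ζ) μ).toReal with hM
  have hMfin : eLpNormEssSup (⇑ζ) μ < ⊤ := by
    have := hζi.eLpNorm_lt_top
    rwa [eLpNorm_exponent_top] at this
  have hζbd : ∀ᵐ x ∂μ, ‖ζ x‖ ≤ M := by
    filter_upwards [ae_le_eLpNormEssSup (f := ⇑ζ) (μ := μ)] with x hx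
    have : (‖ζ x‖₊ : ℝ≥0∞) ≤ eLpNormEssSup (⇑ζ) μ := hx
    have h2 := ENNReal.toReal_mono hMfin.ne this
    simpa using h2
  have hM0 : 0 ≤ M := ENNReal.toReal_nonneg
  set δ : ℝ := ε / (M + 1) with hδ
  have hδ0 : 0 < δ := div_pos hε (by linarith)
  have hδM : δ * M ≤ ε := by
    rw [hδ, div_mul_eq_mul_div, div_le_iff₀ (by linarith)]
    nlinarith
  -- membership of u + t • h in U
  have memU : ∀ t : ℝ, 0 ≤ t → t ≤ τ₀ → u + t • h ∈ U := by
    intro t ht0 htτ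
    have ha0 : (0:ℝ) ≤ t / τ₀ := div_nonneg ht0 hτ₀.le
    have ha1 : t / τ₀ ≤ 1 := (div_le_one hτ₀).mpr htτ
    have hmem := hU_convex (b := 1 - t / τ₀) hτ₀mem hu ha0 (by linarith) (by ring)
    have he : (t / τ₀) • (u + τ₀ • h) + (1 - t / τ₀) • u = u + ((t/τ₀) * τ₀) • h := by
      module
    rw [he, div_mul_cancel₀ t hτ₀.ne'] at hmem
    exact hmem
  -- key supersolution property
  have key : ∀ τ : ℝ, 0 < τ → τ ≤ δ → τ < τ₀ →
      S (Φ (y + τ • ζ)) (u + τ • h) ≤ y + τ • ζ := by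
    intro τ hτpos hτδ hττ₀
    set F : Lp ℝ 2 μ := S (Φ (y + τ • ζ)) (u + τ • h) with hF
    -- a.e. lower bound -ε ≤ (y + t • ζ) x for 0 ≤ t ≤ δ
    have hlow : ∀ t : ℝ, 0 ≤ t → t ≤ δ → ∀ᵐ x ∂μ, -ε ≤ (y + t • ζ) x := by
      intro t ht0 htδ
      filter_upwards [hy0ae, hζbd, Lp.coeFn_add y (t • ζ), Lp.coeFn_smul t ζ]
        with x h1 h2 h3 h4
      rw [h3]
      simp only [h4, Pi.smul_apply, smul_eq_mul, Pi.add_apply]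
      have habs : |t * ζ x| ≤ ε := by
        rw [abs_mul, abs_of_nonneg ht0]
        calc t * |ζ x| ≤ δ * M := by
              apply mul_le_mul htδ _ (abs_nonneg _) hδ0.le
              simpa [Real.norm_eq_abs] using h2
          _ ≤ ε := hδM
      have := abs_le.mp habs
      linarith
    -- Step A : concavity inequality for σ ∈ (0, τ)
    have stepA : ∀ σ : ℝ, 0 < σ → σ < τ →
        (σ/τ) • F + (1 - σ/τ) • y ≤ S (Φ (y + σ • ζ)) (u + σ • h) := by
      intro σ hσ0 hστ
      set lam : ℝ := σ / τ with hlamdef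
      have hlam0 : 0 ≤ lam := div_nonneg hσ0.le hτpos.le
      have hlam1 : lam ≤ 1 := by
        rw [hlamdef, div_le_one hτpos]; exact hστ.le
      have hlamτ : lam * τ = σ := div_mul_cancel₀ σ hτpos.ne'
      have hA := hS_concave (Φ (y + τ • ζ)) (hΦ_mem _) (Φ y) (hΦ_mem _)
        (u + τ • h) (memU τ hτpos.le hττ₀.le) u hu lam ⟨hlam0, hlam1⟩
      have e1 : lam • (u + τ • h) + (1 - lam) • u = u + σ • h := by
        have : lam • (u + τ • h) + (1 - lam) • u = u + (lam * τ) • h := by module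
        rw [this, hlamτ]
      have e2 : lam • (y + τ • ζ) + (1 - lam) • y = y + σ • ζ := by
        have : lam • (y + τ • ζ) + (1 - lam) • y = y + (lam * τ) • ζ := by module
        rw [this, hlamτ]
      rw [e1, ← hyfix] at hA
      have hB := hΦ_concave (y + τ • ζ) y (hlow τ hτpos.le hτδ)
        (by simpa using hlow 0 le_rfl hδ0.le) lam ⟨hlam0, hlam1⟩
      rw [e2] at hB
      have hC := hS_mono_p (u + σ • h) (memU σ hσ0.le (hστ.trans hττ₀).le)
        _ _ hB
      exact hA.trans hC
    -- the sequence σk → 0 inside (0, τ)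
    set σk : ℕ → ℝ := fun k => τ / (k + 2) with hσk
    have hσkpos : ∀ k, 0 < σk k := fun k => div_pos hτpos (by positivity)
    have hσklt : ∀ k, σk k < τ := by
      intro k
      rw [hσk]
      calc τ / ((k:ℝ) + 2) ≤ τ / 2 := by
            apply div_le_div_of_nonneg_left hτpos.le (by norm_num)
            · norm_num
        _ < τ := by linarith
    have hσkIoo : ∀ k, σk k ∈ Set.Ioo (0:ℝ) τ₀ :=
      fun k => ⟨hσkpos k, (hσklt k).trans hττ₀⟩
    have hσk0 : Tendsto σk atTop (𝓝 0) := by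
      have h1 : Tendsto (fun k : ℕ => ((k:ℝ) + 2)) atTop atTop :=
        tendsto_atTop_add_const_right _ _ tendsto_natCast_atTop_atTop
      have h2 : Tendsto (fun k : ℕ => ((k:ℝ) + 2)⁻¹) atTop (𝓝 0) :=
        h1.inv_tendsto_atTop
      have h3 := h2.const_mul τ
      simpa [hσk, div_eq_mul_inv] using h3
    have hlim := hDΨ ζ hζi σk hσkIoo hσk0
    -- a.e. pointwise inequality for each k
    have hptk : ∀ k : ℕ, ∀ᵐ x ∂μ, τ⁻¹ * (F x - y x) ≤
        (((σk k)⁻¹ • (S (Φ (y + σk k • ζ)) (u + σk k • h) - y) : Lp ℝ 2 μ) x) := by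
      intro k
      set s : ℝ := σk k with hs
      have hspos : 0 < s := hσkpos k
      have hstep := (Lp.coeFn_le _ _).mpr (stepA s hspos (hσklt k))
      filter_upwards [hstep,
        Lp.coeFn_add ((s/τ) • F) ((1 - s/τ) • y),
        Lp.coeFn_smul (s/τ) F, Lp.coeFn_smul (1 - s/τ) y,
        Lp.coeFn_smul s⁻¹ (S (Φ (y + s • ζ)) (u + s • h) - y),
        Lp.coeFn_sub (S (Φ (y + s • ζ)) (u + s • h)) y]
        with x h1 h2 h3 h4 h5 h6
      rw [h2] at h1
      simp only [Pi.add_apply] at h1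
      rw [h3, h4] at h1
      simp only [Pi.smul_apply, smul_eq_mul] at h1
      rw [h5]
      simp only [Pi.smul_apply, smul_eq_mul, h6, Pi.sub_apply]
      set G := (S (Φ (y + s • ζ)) (u + s • h)) x
      have hfy : (s/τ) * (F x - y x) ≤ G - y x := by nlinarith
      have h7 : s⁻¹ * ((s/τ) * (F x - y x)) ≤ s⁻¹ * (G - y x) :=
        mul_le_mul_of_nonneg_left hfy (inv_nonneg.mpr hspos.le)
      calc τ⁻¹ * (F x - y x) = s⁻¹ * ((s/τ) * (F x - y x)) := by
            field_simp
        _ ≤ s⁻¹ * (G - y x) := h7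
    have hptall : ∀ᵐ x ∂μ, ∀ k : ℕ, τ⁻¹ * (F x - y x) ≤
        (((σk k)⁻¹ • (S (Φ (y + σk k • ζ)) (u + σk k • h) - y) : Lp ℝ 2 μ) x) :=
      ae_all_iff.mpr hptk
    -- pass to the limit
    have hfin : ∀ᵐ x ∂μ, F x ≤ (y + τ • ζ) x := by
      filter_upwards [hptall, hlim, hζeq, Lp.coeFn_add y (τ • ζ), Lp.coeFn_smul τ ζ]
        with x h1 h2 h3 h4 h5
      have hle : ((τ⁻¹ * (F x - y x) : ℝ) : EReal) ≤ DΨ ζ x := by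
        refine ge_of_tendsto h2 (Filter.Eventually.of_forall fun k => ?_)
        exact EReal.coe_le_coe_iff.mpr (h1 k)
      rw [h3] at hle
      have hreal : τ⁻¹ * (F x - y x) ≤ ζ x := EReal.coe_le_coe_iff.mp hle
      rw [h4]
      simp only [h5, Pi.smul_apply, smul_eq_mul, Pi.add_apply]
      have := mul_le_mul_of_nonneg_left hreal hτpos.le
      rw [← mul_assoc, mul_inv_cancel₀ hτpos.ne', one_mul] at this
      linarith
    exact (Lp.coeFn_le _ _).mp hfin
  -- assemble the sequences
  set T : ℝ := min δ τ₀ with hT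
  have hT0 : 0 < T := lt_min hδ0 hτ₀
  set τn : ℕ → ℝ := fun n => T / (n + 2) with hτn
  have hτnpos : ∀ n, 0 < τn n := fun n => div_pos hT0 (by positivity)
  have hτnltT : ∀ n, τn n < T := by
    intro n
    calc T / ((n:ℝ) + 2) ≤ T / 2 := by
          apply div_le_div_of_nonneg_left hT0.le (by norm_num); norm_num
      _ < T := by linarith
  have hτnIoo : ∀ n, τn n ∈ Set.Ioo (0:ℝ) τ₀ :=
    fun n => ⟨hτnpos n, (hτnltT n).trans_le (min_le_right _ _)⟩
  have hτnδ : ∀ n, τn n ≤ δ := fun n => ((hτnltT n).trans_le (min_le_left _ _)).le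
  refine ⟨fun _ => ζ, τn, fun _ => ⟨hζr, hζi⟩, fun _ => le_rfl, ?_, hτnIoo, ?_, ?_, ?_, ?_⟩
  · intro n
    apply div_le_div_of_nonneg_left hT0.le (by positivity)
    push_cast; linarith
  · have h1 : Tendsto (fun n : ℕ => ((n:ℝ) + 2)) atTop atTop :=
      tendsto_atTop_add_const_right _ _ tendsto_natCast_atTop_atTop
    have h3 := (h1.inv_tendsto_atTop).const_mul T
    simpa [hτn, div_eq_mul_inv] using h3
  · intro q _ _
    have hz : ∀ n : ℕ, eLpNorm (⇑((fun _ => ζ) n - ζ)) q μ = 0 := by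
      intro n
      simp only [sub_self]
      rw [eLpNorm_congr_ae (Lp.coeFn_zero ℝ 2 μ)]
      exact eLpNorm_zero
    have heq : (fun n : ℕ => eLpNorm (⇑((fun _ : ℕ => ζ) n - ζ)) q μ) =
        fun _ : ℕ => (0 : ℝ≥0∞) := funext hz
    rw [heq]
    exact tendsto_const_nhds
  · intro n
    exact key (τn n) (hτnpos n) (hτnδ n) (hτnIoo n).2
  · filter_upwards [hζeq] with x hx
    have : (fun n : ℕ => DΨ ζ x - ((ζ x : ℝ) : EReal)) = fun _ => (0 : EReal) := by
      funext n
      rw [hx, ← EReal.coe_sub, sub_self, EReal.coe_zero]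
    simpa [this] using tendsto_const_nhds
end

section
/- Let (X₁, Σ₁) be a measurable space and let (X₂, Σ₂, μ₂) be a σ-finite measure space. Assume that F : X₁ × X₂ → [−∞, ∞] is measurable with respect to the product σ-algebra Σ₁ ⊗ Σ₂. Then the function G : X₁ → [−∞, ∞] defined by G(x₁) := essinf_{x₂ ∈ X₂} F(x₁, x₂) (the essential infimum of the function x₂ ↦ F(x₁, x₂) with respect to μ₂) is Σ₁-measurable. -/
open MeasureTheory Filter Topology ENNReal

open Classical in
lemma essInf_eq_iSup_rat {α : Type*} [MeasurableSpace α] (μ : Measure α) (f : α → EReal) :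
    essInf f μ = ⨆ q : ℚ, if μ {x | f x < ((q : ℝ) : EReal)} = 0 then ((q : ℝ) : EReal) else ⊥ := by
  rw [essInf_eq_sSup]
  apply le_antisymm
  · refine sSup_le fun a ha => ?_
    by_contra h
    push_neg at h
    obtain ⟨q, hq1, hq2⟩ := EReal.exists_rat_btwn_of_lt h
    have h0 : μ {x | f x < ((q : ℝ) : EReal)} = 0 :=
      measure_mono_null (fun x hx => lt_trans hx hq2) ha
    have : ((q : ℝ) : EReal) ≤ ⨆ q : ℚ, if μ {x | f x < ((q : ℝ) : EReal)} = 0 then ((q : ℝ) : EReal) else ⊥ := by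
      refine le_trans ?_ (le_iSup _ q)
      rw [if_pos h0]
    exact absurd (this.trans_lt hq1) (lt_irrefl _)
  · refine iSup_le fun q => ?_
    split_ifs with h0
    · exact le_sSup h0
    · exact bot_le

/-- Lemma 6.1 of the paper, first part: measurability of a partial
essential infimum of a product-measurable extended real-valued function. -/
theorem stmt_16
    {X₁ X₂ : Type*} [MeasurableSpace X₁] [MeasurableSpace X₂]
    (μ₂ : Measure X₂) [SigmaFinite μ₂]
    (F : X₁ × X₂ → EReal) (hF : Measurable F) :
    Measurable fun x₁ => essInf (fun x₂ => F (x₁, x₂)) μ₂ := by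
  simp_rw [essInf_eq_iSup_rat]
  refine Measurable.iSup fun q => ?_
  have hs : MeasurableSet {p : X₁ × X₂ | F p < ((q : ℝ) : EReal)} :=
    measurableSet_lt hF measurable_const
  have hμ : Measurable fun x₁ => μ₂ (Prod.mk x₁ ⁻¹' {p : X₁ × X₂ | F p < ((q : ℝ) : EReal)}) :=
    measurable_measure_prodMk_left hs
  have hset : MeasurableSet {x₁ : X₁ | μ₂ {x₂ | F (x₁, x₂) < ((q : ℝ) : EReal)} = 0} := by
    have := hμ (measurableSet_singleton 0)
    convert this using 1
    rfl
  exact Measurable.ite hset measurable_const measurable_const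
end

section
/- Let Ω ⊂ ℝ^d (d ∈ ℕ) be an open bounded nonempty set, let κ ≥ 0 be a constant, and let c₀ : ℝ^d → [0, ∞) be a nonnegative Lebesgue-measurable function that is finite almost everywhere. For every v ∈ L²(Ω) with v ≥ −κ a.e. in Ω, define Θ(v)(x) := κ + essinf_{ξ ∈ ℝ^d, ξ ≥ 0 componentwise, x + ξ ∈ Ω} (c₀(ξ) + v(x + ξ)) for a.a. x ∈ Ω, where the essential infimum is taken with respect to the Lebesgue measure on {ξ ∈ ℝ^d : ξ ≥ 0}. Then Θ(v) is a well-defined element of L⁰₊(Ω): it does not depend on the chosen representative of v, it is Lebesgue-measurable, it satisfies Θ(v) ≥ 0 a.e. in Ω, and it is finite a.e. in Ω. -/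
open MeasureTheory Filter Topology ENNReal Classical

set_option maxHeartbeats 1000000

private lemma ereal_const_add_continuous (κ : ℝ) :
    Continuous fun a : EReal => (κ : EReal) + a := by
  rw [continuous_iff_continuousAt]
  intro a
  have h1 : ContinuousAt (fun p : EReal × EReal => p.1 + p.2) ((κ : EReal), a) :=
    EReal.continuousAt_add (Or.inl (EReal.coe_ne_top κ)) (Or.inl (EReal.coe_ne_bot κ))
  have h2 : ContinuousAt (fun a : EReal => ((κ : EReal), a)) a :=
    (continuous_const.prodMk continuous_id).continuousAt
  exact h1.comp h2

private lemma essInf_eq_rat_sup {β : Type*} [MeasurableSpace β] (μ : Measure β)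
    (f : β → EReal) :
    essInf f μ
      = ⨆ q : ℚ, if μ {ξ | f ξ < ((q : ℝ) : EReal)} = 0 then ((q : ℝ) : EReal) else ⊥ := by
  rw [essInf_eq_sSup]
  apply le_antisymm
  · apply sSup_le
    intro b hb
    apply le_of_forall_lt
    intro a ha
    obtain ⟨q, haq, hqb⟩ := EReal.exists_rat_btwn_of_lt ha
    refine lt_of_lt_of_le haq (le_iSup_of_le q ?_)
    rw [if_pos]
    exact measure_mono_null (fun ξ hξ => lt_trans hξ hqb) hb
  · apply iSup_le
    intro q
    split_ifs with h
    · exact le_sSup h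
    · exact bot_le

private lemma measurable_essInf_section {α β : Type*} [MeasurableSpace α]
    [MeasurableSpace β] (μ : Measure β) [SFinite μ] (F : α → β → EReal)
    (hF : Measurable fun p : α × β => F p.1 p.2) :
    Measurable fun x => essInf (F x) μ := by
  have key : ∀ x, essInf (F x) μ
      = ⨆ q : ℚ, if μ (Prod.mk x ⁻¹' {p : α × β | F p.1 p.2 < ((q : ℝ) : EReal)}) = 0
          then ((q : ℝ) : EReal) else ⊥ := by
    intro x
    rw [essInf_eq_rat_sup]
    rfl
  simp_rw [key]
  apply Measurable.iSup
  intro q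
  have hm : Measurable fun x => μ (Prod.mk x ⁻¹' {p : α × β | F p.1 p.2 < ((q : ℝ) : EReal)}) :=
    measurable_measure_prodMk_left (measurableSet_lt hF measurable_const)
  exact Measurable.ite (hm (measurableSet_singleton 0)) measurable_const measurable_const

/-- Corollary 6.2 of the paper: well-definedness of the impulse
control obstacle map `Θ(v)(x) = κ + essinf_{ξ ≥ 0, x + ξ ∈ Ω} (c₀(ξ) + v(x + ξ))`:
independence of the representative of `v`, measurability, nonnegativity a.e. in `Ω`,
and finiteness a.e. in `Ω`. -/
theorem stmt_18
    (d : ℕ) (hd : 0 < d)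
    (Ω : Set (Fin d → ℝ)) (hΩo : IsOpen Ω) (hΩb : Bornology.IsBounded Ω)
    (hΩne : Ω.Nonempty)
    (κ : ℝ) (hκ : 0 ≤ κ)
    (c₀ : (Fin d → ℝ) → ℝ) (hc₀m : Measurable c₀) (hc₀ : ∀ ξ, 0 ≤ c₀ ξ)
    (Θ : ((Fin d → ℝ) → ℝ) → (Fin d → ℝ) → EReal)
    (hΘ : ∀ (w : (Fin d → ℝ) → ℝ) (x : Fin d → ℝ),
      Θ w x = (κ : EReal) +
        essInf
          (fun ξ : Fin d → ℝ =>
            if x + ξ ∈ Ω then ((c₀ ξ + w (x + ξ) : ℝ) : EReal) else (⊤ : EReal))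
          (volume.restrict {ξ : Fin d → ℝ | 0 ≤ ξ}))
    (v : (Fin d → ℝ) → ℝ) (hvm : Measurable v)
    (hv2 : MemLp v 2 (volume.restrict Ω))
    (hvκ : ∀ᵐ x ∂(volume.restrict Ω), -κ ≤ v x) :
    (∀ v' : (Fin d → ℝ) → ℝ, Measurable v' →
      v =ᵐ[volume.restrict Ω] v' → ∀ x, Θ v x = Θ v' x) ∧
    Measurable (Θ v) ∧
    (∀ᵐ x ∂(volume.restrict Ω), 0 ≤ Θ v x) ∧
    (∀ᵐ x ∂(volume.restrict Ω), Θ v x ≠ ⊤) := by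
  set μ : Measure (Fin d → ℝ) := volume.restrict {ξ : Fin d → ℝ | 0 ≤ ξ} with hμdef
  have hQmeas : MeasurableSet {ξ : Fin d → ℝ | 0 ≤ ξ} := by
    have : {ξ : Fin d → ℝ | 0 ≤ ξ} = Set.pi Set.univ fun _ : Fin d => Set.Ici (0 : ℝ) := by
      ext ξ; simp [Pi.le_def, Set.mem_pi]
    rw [this]
    exact MeasurableSet.univ_pi fun _ => measurableSet_Ici
  -- preimages of null sets under translations are μ-null
  have hnull : ∀ (x : Fin d → ℝ) (B : Set (Fin d → ℝ)), volume B = 0 →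
      μ ((fun ξ => x + ξ) ⁻¹' B) = 0 := by
    intro x B hB
    apply le_antisymm _ zero_le
    calc μ ((fun ξ => x + ξ) ⁻¹' B)
        = volume (((fun ξ => x + ξ) ⁻¹' B) ∩ {ξ : Fin d → ℝ | 0 ≤ ξ}) :=
          Measure.restrict_apply' hQmeas
      _ ≤ volume ((fun ξ => x + ξ) ⁻¹' B) := measure_mono Set.inter_subset_left
      _ = volume B := measure_preimage_add volume x B
      _ = 0 := hB
  refine ⟨?_, ?_, ?_, ?_⟩
  · -- independence of the representative
    intro v' hv'm hvv' x
    rw [hΘ v x, hΘ v' x]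
    congr 1
    apply essInf_congr_ae
    have hN : volume ({y | v y ≠ v' y} ∩ Ω) = 0 := by
      rw [Filter.EventuallyEq, ae_iff] at hvv'
      rwa [Measure.restrict_apply' hΩo.measurableSet] at hvv'
    have hNx := hnull x _ hN
    rw [Filter.EventuallyEq, ae_iff]
    refine measure_mono_null ?_ hNx
    intro ξ hξ
    simp only [Set.mem_setOf_eq] at hξ
    by_cases hmem : x + ξ ∈ Ω
    · exact ⟨fun he => hξ (by simp [hmem, he]), hmem⟩
    · exact absurd (by simp [hmem]) hξ
  · -- measurability
    have hΘeq : Θ v = fun x => (κ : EReal) +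
        essInf (fun ξ : Fin d → ℝ =>
          if x + ξ ∈ Ω then ((c₀ ξ + v (x + ξ) : ℝ) : EReal) else (⊤ : EReal)) μ :=
      funext fun x => hΘ v x
    rw [hΘeq]
    have hadd : Measurable fun p : (Fin d → ℝ) × (Fin d → ℝ) => p.1 + p.2 :=
      measurable_fst.add measurable_snd
    have hF : Measurable fun p : (Fin d → ℝ) × (Fin d → ℝ) =>
        if p.1 + p.2 ∈ Ω then ((c₀ p.2 + v (p.1 + p.2) : ℝ) : EReal) else (⊤ : EReal) := by
      refine Measurable.ite (hadd hΩo.measurableSet) ?_ measurable_const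
      exact ((hc₀m.comp measurable_snd).add (hvm.comp hadd)).coe_real_ereal
    have h1 : Measurable fun x : Fin d → ℝ => essInf (fun ξ : Fin d → ℝ =>
        if x + ξ ∈ Ω then ((c₀ ξ + v (x + ξ) : ℝ) : EReal) else (⊤ : EReal)) μ :=
      measurable_essInf_section μ
        (fun x ξ => if x + ξ ∈ Ω then ((c₀ ξ + v (x + ξ) : ℝ) : EReal) else (⊤ : EReal)) hF
    exact ((ereal_const_add_continuous κ).measurable).comp h1
  · -- nonnegativity
    have hB : volume {y : Fin d → ℝ | ¬ (y ∈ Ω → -κ ≤ v y)} = 0 := by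
      rw [ae_restrict_iff' hΩo.measurableSet] at hvκ
      rw [ae_iff] at hvκ
      exact hvκ
    refine ae_of_all _ fun x => ?_
    have hBx := hnull x _ hB
    have hae : ∀ᵐ ξ ∂μ, ξ ∉ (fun ξ => x + ξ) ⁻¹' {y : Fin d → ℝ | ¬ (y ∈ Ω → -κ ≤ v y)} :=
      measure_eq_zero_iff_ae_notMem.1 hBx
    have hle : ((-κ : ℝ) : EReal) ≤ essInf (fun ξ : Fin d → ℝ =>
        if x + ξ ∈ Ω then ((c₀ ξ + v (x + ξ) : ℝ) : EReal) else (⊤ : EReal)) μ := by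
      refine le_essInf_of_ae_le _ ?_
      filter_upwards [hae] with ξ hξ
      simp only [Set.mem_preimage, Set.mem_setOf_eq, not_not] at hξ
      by_cases hmem : x + ξ ∈ Ω
      · simp only [if_pos hmem]
        exact EReal.coe_le_coe_iff.2 (by linarith [hc₀ ξ, hξ hmem])
      · simp only [if_neg hmem]
        exact le_top
    rw [hΘ v x]
    calc (0 : EReal) = (κ : EReal) + ((-κ : ℝ) : EReal) := by
          rw [← EReal.coe_add]; norm_num
      _ ≤ _ := add_le_add le_rfl hle
  · -- finiteness a.e. in Ω
    rw [ae_restrict_iff' hΩo.measurableSet]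
    refine ae_of_all _ fun x hx => ?_
    obtain ⟨ε, hε, hball⟩ := Metric.isOpen_iff.1 hΩo x hx
    set S : Set (Fin d → ℝ) := Set.pi Set.univ fun _ : Fin d => Set.Ico (0 : ℝ) (ε / 2)
      with hSdef
    have hSmeas : MeasurableSet S := MeasurableSet.univ_pi fun _ => measurableSet_Ico
    have hSsub : S ⊆ {ξ : Fin d → ℝ | 0 ≤ ξ} := by
      intro ξ hξ
      intro i
      exact (hξ i (Set.mem_univ i)).1
    have hSμ : μ S ≠ 0 := by
      rw [hμdef, Measure.restrict_apply hSmeas,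
        Set.inter_eq_self_of_subset_left hSsub, hSdef, volume_pi_pi]
      simp only [Real.volume_Ico, sub_zero, Finset.prod_const, Finset.card_univ,
        Fintype.card_fin]
      exact pow_ne_zero d (by simp [ENNReal.ofReal_eq_zero]; linarith)
    have hSΩ : ∀ ξ ∈ S, x + ξ ∈ Ω := by
      intro ξ hξ
      apply hball
      rw [Metric.mem_ball, dist_pi_lt_iff hε]
      intro i
      have hi := hξ i (Set.mem_univ i)
      rw [Real.dist_eq]
      have : (x + ξ) i - x i = ξ i := by simp
      rw [this, abs_of_nonneg hi.1]
      linarith [hi.2]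
    intro htop
    rw [hΘ v x] at htop
    have hinf : essInf (fun ξ : Fin d → ℝ =>
        if x + ξ ∈ Ω then ((c₀ ξ + v (x + ξ) : ℝ) : EReal) else (⊤ : EReal)) μ = ⊤ := by
      by_contra h
      exact (EReal.add_lt_top (EReal.coe_ne_top κ) h).ne htop
    have h0 : μ {ξ : Fin d → ℝ |
        (if x + ξ ∈ Ω then ((c₀ ξ + v (x + ξ) : ℝ) : EReal) else (⊤ : EReal))
          < essInf (fun ξ : Fin d → ℝ =>
            if x + ξ ∈ Ω then ((c₀ ξ + v (x + ξ) : ℝ) : EReal) else (⊤ : EReal)) μ} = 0 :=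
      meas_lt_essInf
    rw [hinf] at h0
    apply hSμ
    refine measure_mono_null ?_ h0
    intro ξ hξ
    have := hSΩ ξ hξ
    simp only [Set.mem_setOf_eq, if_pos this]
    exact EReal.coe_lt_top _
end
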